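/- arXiv:2112.10868 — 5 statements merged into one kernel-verified Lean document; each statement's English description precedes it below -/
import Mathlib

section
/- Under the stated relations, for every proper divisor n of d (i.e., n | d and n ≠ d) one has Tr(A^n) = 0 and Tr(B^n) = 0. -/
open Matrix

/-- `omg d t` is ω^t = exp(2πi·t/d), where ω = exp(2πi/d). -/
noncomputable def omg (d : ℕ) (t : ℝ) : ℂ :=
  Complex.exp ((2 * Real.pi * t / d : ℝ) * Complex.I)

/-- The coefficient a_k = ω^{(2k−d)/(4m)} / (2 cos(π/(2m))). -/
noncomputable def acoef (d m k : ℕ) : ℂ :=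
  omg d ((2 * (k : ℝ) - d) / (4 * m)) / ((2 * Real.cos (Real.pi / (2 * m)) : ℝ) : ℂ)

/-- `abar d m A B k` is Ābar^{(k)} = a_k A^k + conj(a_k) B^k. -/
noncomputable def abar {n : Type*} [Fintype n] [DecidableEq n] (d m : ℕ)
    (A B : Matrix n n ℂ) (k : ℕ) : Matrix n n ℂ :=
  acoef d m k • A ^ k + (starRingEnd ℂ) (acoef d m k) • B ^ k

section Aux

open Complex Finset

noncomputable def Efun : ℝ → ℂ := fun x => Complex.exp ((x:ℝ) * Complex.I)

lemma hEadd (x y : ℝ) : Efun x * Efun y = Efun (x+y) := by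
  rw [Efun, Efun, Efun, ← Complex.exp_add]; congr 1; push_cast; ring

lemma hE0 : Efun 0 = 1 := by simp [Efun]

lemma hEne (x : ℝ) : Efun x ≠ 0 := Complex.exp_ne_zero _

lemma hEz (n : ℤ) (t : ℝ) : (Efun t)^n = Efun (n*t) := by
  rw [Efun, Efun, ← Complex.exp_int_mul]; congr 1; push_cast; ring

lemma hconjE (x : ℝ) : (starRingEnd ℂ) (Efun x) = Efun (-x) := by
  rw [Efun, Efun, ← Complex.exp_conj]; congr 1
  simp [Complex.conj_I]

lemma h2cos (θ : ℝ) : ((2 * Real.cos θ : ℝ) : ℂ) = Efun θ + Efun (-θ) := by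
  have h := Complex.two_cos (θ:ℂ)
  rw [Efun, Efun]
  push_cast
  rw [h]



private lemma core {N : ℕ} (d : ℕ) (hd : 2 ≤ d)
    (U V : Matrix (Fin N) (Fin N) ℂ) (ζ : ℂ)
    (hζ0 : ζ ≠ 0) (hg1 : ζ^2 ≠ 1)
    (hUd : U^d = ζ • 1) (hVd : V^d = ζ⁻¹ • 1)
    (hH1 : U^(d-1)*V + V^(d-1)*U = (ζ + ζ⁻¹) • 1)
    (hR : ∀ k, 1 ≤ k → k + 2 ≤ d → U^k*V + V^k*U = U^(k+1) + V^(k+1)) :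
    ∀ n, 1 ≤ n → n < d → (U^n).trace = 0 ∧ (V^n).trace = 0 := by
  set g : ℂ := ζ^2 with hgdef
  have hg0 : g ≠ 0 := pow_ne_zero _ hζ0
  have hgm1 : g - 1 ≠ 0 := sub_ne_zero.mpr hg1
  set Vi : Matrix (Fin N) (Fin N) ℂ := ζ • V^(d-1) with hVidef
  set Ui : Matrix (Fin N) (Fin N) ℂ := ζ⁻¹ • U^(d-1) with hUidef
  have hVVi : V * Vi = 1 := by
    rw [hVidef, mul_smul_comm, ← pow_succ', Nat.sub_add_cancel (by omega : 1 ≤ d), hVd,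
      smul_smul, mul_inv_cancel₀ hζ0, one_smul]
  have hViV : Vi * V = 1 := by
    rw [hVidef, smul_mul_assoc, ← pow_succ, Nat.sub_add_cancel (by omega : 1 ≤ d), hVd,
      smul_smul, mul_inv_cancel₀ hζ0, one_smul]
  have hUUi : U * Ui = 1 := by
    rw [hUidef, mul_smul_comm, ← pow_succ', Nat.sub_add_cancel (by omega : 1 ≤ d), hUd,
      smul_smul, inv_mul_cancel₀ hζ0, one_smul]
  have hUiU : Ui * U = 1 := by
    rw [hUidef, smul_mul_assoc, ← pow_succ, Nat.sub_add_cancel (by omega : 1 ≤ d), hUd,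
      smul_smul, inv_mul_cancel₀ hζ0, one_smul]
  have hcV : Commute Vi V := by unfold Commute SemiconjBy; rw [hViV, hVVi]
  have hVkVik : ∀ j : ℕ, Vi^j * V^j = 1 := fun j => by
    rw [← hcV.mul_pow, hViV, one_pow]
  have hVVik : ∀ j : ℕ, V^j * Vi^j = 1 := fun j => by
    rw [← hcV.symm.mul_pow, hVVi, one_pow]
  have hVid : Vi^d = ζ • 1 := by
    have h := hVkVik d
    rw [hVd, mul_smul_comm, mul_one] at h
    calc Vi^d = ζ • (ζ⁻¹ • Vi^d) := by rw [smul_smul, mul_inv_cancel₀ hζ0, one_smul]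
    _ = ζ • 1 := by rw [h]
  -- the two-eigenvalue element Z
  set Z : Matrix (Fin N) (Fin N) ℂ := Vi * U with hZdef
  set Y : Matrix (Fin N) (Fin N) ℂ := Ui * V with hYdef
  have hZY : Z * Y = 1 := by
    rw [hZdef, hYdef, mul_assoc, ← mul_assoc U, hUUi, one_mul, hViV]
  have h1 : ζ • Y + ζ⁻¹ • Z = (ζ + ζ⁻¹) • 1 := by
    rw [hYdef, hZdef, hUidef, hVidef, smul_mul_assoc, smul_mul_assoc, smul_smul, smul_smul,
      mul_inv_cancel₀ hζ0, inv_mul_cancel₀ hζ0, one_smul, one_smul, hH1]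
  have h1' : g • Y + Z = (g+1) • 1 := by
    have h2 := congrArg (fun X => ζ • X) h1
    simp only [smul_add, smul_smul, mul_inv_cancel₀ hζ0, one_smul] at h2
    rw [show ζ*(ζ+ζ⁻¹) = ζ*ζ+1 by field_simp] at h2
    rw [hgdef, sq]
    exact h2
  have hZq : Z * Z = (1+g) • Z - g • 1 := by
    have h2 := congrArg (fun X => Z * X) h1'
    simp only [mul_add, mul_smul_comm, hZY, mul_one] at h2
    have h3 : g • 1 + Z * Z = (g+1) • Z := h2
    calc Z * Z = (g • 1 + Z * Z) - g • 1 := by abel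
    _ = (g+1) • Z - g • 1 := by rw [h3]
    _ = (1+g) • Z - g • 1 := by rw [add_comm g 1]
  -- the idempotent Q
  set Q : Matrix (Fin N) (Fin N) ℂ := (g-1)⁻¹ • (Z - 1) with hQdef
  have hgQ : (g-1) • Q = Z - 1 := by
    rw [hQdef, smul_smul, mul_inv_cancel₀ hgm1, one_smul]
  have hZ1Q : Z = 1 + (g-1) • Q := by rw [hgQ]; abel
  have hZZ1 : (Z-1) * (Z-1) = (g-1) • (Z-1) := by
    have : (Z-1) * (Z-1) = Z*Z - (Z + Z) + 1 := by noncomm_ring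
    rw [this, hZq]
    module
  have hQ2 : Q * Q = Q := by
    rw [hQdef, smul_mul_assoc, mul_smul_comm, hZZ1, smul_smul, smul_smul]
    congr 1
    field_simp
  -- conjugated idempotents
  set Qj : ℕ → Matrix (Fin N) (Fin N) ℂ := fun j => Vi^j * Q * V^j with hQjdef
  have hQj0 : Qj 0 = Q := by simp [hQjdef]
  have hsand : ∀ (j : ℕ) (X₁ X₂ : Matrix (Fin N) (Fin N) ℂ),
      (Vi^j * X₁ * V^j) * (Vi^j * X₂ * V^j) = Vi^j * (X₁ * X₂) * V^j := by
    intro j X₁ X₂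
    simp only [mul_assoc]
    rw [← mul_assoc (V^j) (Vi^j), hVVik j, one_mul]
  have hQjconj : ∀ a j, Vi^a * Qj j * V^a = Qj (j+a) := by
    intro a j
    simp only [hQjdef]
    rw [show j + a = a + j from add_comm j a, pow_add, pow_add]
    rw [((Commute.refl V).pow_pow a j).eq]
    simp only [mul_assoc]
  have hQjper : ∀ j, Qj (j+d) = Qj j := by
    intro j
    simp only [hQjdef, pow_add, hVid, hVd]
    simp [mul_smul_comm, smul_mul_assoc, smul_smul, inv_mul_cancel₀ hζ0]
  have hQjidem : ∀ j, Qj j * Qj j = Qj j := by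
    intro j
    simp only [hQjdef]
    rw [hsand, hQ2]
  -- the P family and the key relation from hR
  have hUVZ : U = V * Z := by rw [hZdef, ← mul_assoc, hVVi, one_mul]
  have hUmV : U - V = V * (Z - 1) := by rw [mul_sub, ← hUVZ, mul_one]
  set Zj : ℕ → Matrix (Fin N) (Fin N) ℂ := fun j => Vi^j * Z * V^j with hZjdef
  set P : ℕ → Matrix (Fin N) (Fin N) ℂ := fun k => Vi^(k+1) * U^k * V with hPdef
  have hP0 : P 0 = 1 := by simp only [hPdef]; rw [pow_zero, pow_one, mul_one, hViV]
  have hZjP : ∀ k, Zj (k+1) * P k = P (k+1) := by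
    intro k
    simp only [hZjdef, hPdef]
    calc Vi^(k+1) * Z * V^(k+1) * (Vi^(k+1) * U^k * V)
        = Vi^(k+1) * Z * (V^(k+1) * Vi^(k+1)) * (U^k * V) := by simp only [mul_assoc]
      _ = Vi^(k+1) * Z * (U^k * V) := by rw [hVVik (k+1), mul_one]
      _ = Vi^(k+1) * (Vi * U) * (U^k * V) := by rw [hZdef]
      _ = Vi^(k+1+1) * U^(k+1) * V := by
          rw [pow_succ Vi (k+1), pow_succ' U k]; simp only [mul_assoc]
  have hPrel : ∀ k, 1 ≤ k → k + 2 ≤ d → P k * (Z-1) = Z-1 := by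
    intro k hk1 hk2
    have h := hR k hk1 hk2
    have h2 : U^k * (U - V) = V^k * (U - V) := by
      rw [mul_sub, mul_sub, ← pow_succ, ← pow_succ, sub_eq_sub_iff_add_eq_add, ← h]
      abel
    rw [hUmV, ← mul_assoc, ← mul_assoc, ← pow_succ] at h2
    have h3 := congrArg (fun X => Vi^(k+1) * X) h2
    simp only [← mul_assoc] at h3
    simp only [hPdef, mul_assoc] at h3 ⊢
    rw [h3, ← mul_assoc, hVkVik (k+1), one_mul]
  have hZjrel : ∀ k, 1 ≤ k → k + 2 ≤ d → Zj k * (Z-1) = Z-1 := by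
    intro k hk1
    induction k, hk1 using Nat.le_induction with
    | base =>
      intro h2
      have : Zj 1 = P 1 := by rw [← hZjP 0, hP0, mul_one]
      rw [this]; exact hPrel 1 le_rfl h2
    | succ k hk ih =>
      intro h2
      calc Zj (k+1) * (Z-1) = Zj (k+1) * (P k * (Z-1)) := by
            rw [hPrel k hk (by omega)]
        _ = (Zj (k+1) * P k) * (Z-1) := (mul_assoc (Zj (k+1)) (P k) (Z-1)).symm
        _ = P (k+1) * (Z-1) := by rw [hZjP k]
        _ = Z - 1 := hPrel (k+1) (by omega) h2
  have hQjZj : ∀ j, Qj j = (g-1)⁻¹ • (Zj j - 1) := by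
    intro j
    simp only [hQjdef, hZjdef, hQdef]
    rw [mul_smul_comm, smul_mul_assoc]
    congr 1
    rw [mul_sub, mul_one, sub_mul, hVkVik j]
  have hQQ0 : ∀ k, 1 ≤ k → k + 2 ≤ d → Qj k * Q = 0 := by
    intro k hk1 hk2
    rw [hQjZj k, hQdef, smul_mul_assoc, mul_smul_comm, sub_mul, hZjrel k hk1 hk2]
    simp
  have hOrthGen : ∀ j k, 1 ≤ k → k + 2 ≤ d → Qj (k+j) * Qj j = 0 := by
    intro j k hk1 hk2
    rw [← hQjconj j k]
    simp only [hQjdef]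
    rw [show Vi^j * (Vi^k * Q * V^k) * V^j * (Vi^j * Q * V^j)
        = (Vi^j * (Vi^k * Q * V^k) * V^j) * (Vi^j * Q * V^j) from rfl, hsand]
    rw [show Vi^k * Q * V^k * Q = Qj k * Q from by rw [← hQj0]; simp only [hQjdef, pow_zero, mul_one, one_mul]]
    rw [hQQ0 k hk1 hk2]
    simp
  -- expansion helper
  have hmul2' : ∀ (a : ℂ) (X X' : Matrix (Fin N) (Fin N) ℂ),
      (1 + a • X) * (1 + a • X') = 1 + a • X + (a • X' + (a*a) • (X * X')) := by
    intro a X X'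
    simp only [mul_add, add_mul, smul_mul_assoc, mul_smul_comm, smul_smul, mul_one, one_mul]
    module
  -- the W family
  set W : ℕ → Matrix (Fin N) (Fin N) ℂ := fun k => Vi^k * U^k with hWdef
  have hW0 : W 0 = 1 := by simp [hWdef]
  have hWsucc : ∀ k, W (k+1) = Zj k * W k := by
    intro k
    simp only [hWdef, hZjdef]
    symm
    calc Vi^k * Z * V^k * (Vi^k * U^k) = Vi^k * Z * ((V^k * Vi^k) * U^k) := by
          simp only [mul_assoc]
      _ = Vi^k * (Vi * U) * U^k := by rw [hVVik k, one_mul, hZdef]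
      _ = Vi^(k+1) * U^(k+1) := by
          rw [pow_succ Vi k, pow_succ' U k]; simp only [mul_assoc]
  have hWd : W d = g • 1 := by
    simp only [hWdef]
    rw [hVid, hUd]; simp [smul_smul, hgdef, sq]
  have hZjQ : ∀ j, Zj j = 1 + (g-1) • Qj j := by
    intro j
    rw [hQjZj j, smul_smul, mul_inv_cancel₀ hgm1, one_smul]
    abel
  -- sum of the idempotents
  set S : ℕ → Matrix (Fin N) (Fin N) ℂ := fun k => ∑ j ∈ Finset.range k, Qj j with hSdef
  have hQjS : ∀ k, k + 2 ≤ d → Qj k * S k = 0 := by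
    intro k hk
    simp only [hSdef, Finset.mul_sum]
    apply Finset.sum_eq_zero
    intro j hj
    rw [Finset.mem_range] at hj
    have h2 := hOrthGen j (k-j) (by omega) (by omega)
    rwa [show k - j + j = k from by omega] at h2
  have hC2 : ∀ k, k ≤ d - 1 → W k = 1 + (g-1) • S k := by
    intro k
    induction k with
    | zero => intro _; simp [hW0, hSdef]
    | succ k ih =>
      intro hk
      rw [hWsucc k, hZjQ k, ih (by omega), hmul2', hQjS k (by omega), smul_zero, add_zero]
      simp only [hSdef, Finset.sum_range_succ, smul_add]
      abel
  -- the boundary identity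
  have hd1 : d - 1 + 1 = d := by omega
  have hQdS : Qj (d-1) * S (d-1) = Qj (d-1) * Q := by
    simp only [hSdef, Finset.mul_sum]
    rw [Finset.sum_eq_single_of_mem 0 (Finset.mem_range.mpr (by omega))]
    · rw [hQj0]
    · intro j hj hj0
      rw [Finset.mem_range] at hj
      have h2 := hOrthGen j (d-1-j) (by omega) (by omega)
      rwa [show d-1-j+j = d-1 from by omega] at h2
  have hSd_split : S d = S (d-1) + Qj (d-1) := by
    simp only [hSdef]
    conv_lhs => rw [← hd1, Finset.sum_range_succ]
  have hbig2 : g • (1 : Matrix (Fin N) (Fin N) ℂ)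
      = 1 + (g-1) • S d + ((g-1)*(g-1)) • (Qj (d-1) * Q) := by
    calc g • (1 : Matrix (Fin N) (Fin N) ℂ) = W d := hWd.symm
      _ = W (d-1+1) := by rw [hd1]
      _ = Zj (d-1) * W (d-1) := hWsucc (d-1)
      _ = (1 + (g-1) • Qj (d-1)) * (1 + (g-1) • S (d-1)) := by
          rw [hZjQ, hC2 (d-1) le_rfl]
      _ = 1 + (g-1) • Qj (d-1) + ((g-1) • S (d-1) + ((g-1)*(g-1)) • (Qj (d-1) * S (d-1))) := hmul2' _ _ _
      _ = 1 + (g-1) • S d + ((g-1)*(g-1)) • (Qj (d-1) * Q) := by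
          rw [hQdS, hSd_split, smul_add]
          abel
  have hSdQ : S d * Q = Q + Qj (d-1) * Q := by
    simp only [hSdef, Finset.sum_mul]
    conv_lhs => rw [show d = d-1+1 from hd1.symm]
    rw [Finset.sum_range_succ]
    congr 1
    rw [Finset.sum_eq_single_of_mem 0 (Finset.mem_range.mpr (by omega))]
    · rw [hQj0, hQ2]
    · intro j hj hj0
      rw [Finset.mem_range] at hj
      exact hQQ0 j (by omega) (by omega)
  have hT0 : Qj (d-1) * Q = 0 := by
    have h : g • Q = Q + (g-1) • (Q + Qj (d-1) * Q) + ((g-1)*(g-1)) • (Qj (d-1) * Q) := by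
      calc g • Q = (g • (1 : Matrix (Fin N) (Fin N) ℂ)) * Q := by
            rw [smul_mul_assoc, one_mul]
        _ = (1 + (g-1) • S d + ((g-1)*(g-1)) • (Qj (d-1) * Q)) * Q := by rw [hbig2]
        _ = 1 * Q + (g-1) • (S d * Q) + ((g-1)*(g-1)) • ((Qj (d-1) * Q) * Q) := by
            rw [add_mul, add_mul, smul_mul_assoc, smul_mul_assoc]
        _ = Q + (g-1) • (Q + Qj (d-1) * Q) + ((g-1)*(g-1)) • (Qj (d-1) * Q) := by
            rw [one_mul, hSdQ, mul_assoc (Qj (d-1)) Q Q, hQ2]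
    have hrearr : Q + (g-1) • (Q + Qj (d-1) * Q) + ((g-1)*(g-1)) • (Qj (d-1) * Q)
        = g • Q + ((g-1)*g) • (Qj (d-1) * Q) := by module
    rw [hrearr] at h
    have h2 : ((g-1)*g) • (Qj (d-1) * Q) = 0 := (left_eq_add.mp h)
    rcases smul_eq_zero.mp h2 with h3 | h3
    · exact absurd h3 (mul_ne_zero hgm1 hg0)
    · exact h3
  have hSd1 : S d = 1 := by
    rw [hT0, smul_zero, add_zero] at hbig2
    have h : (g-1) • S d = (g-1) • (1 : Matrix (Fin N) (Fin N) ℂ) := by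
      calc (g-1) • S d = (1 + (g-1) • S d) - 1 := by abel
        _ = g • (1 : Matrix (Fin N) (Fin N) ℂ) - 1 := by rw [← hbig2]
        _ = (g-1) • (1 : Matrix (Fin N) (Fin N) ℂ) := by module
    exact smul_right_injective _ hgm1 h
  -- full orthogonality
  have hOrthLast : ∀ j, Qj ((d-1)+j) * Qj j = 0 := by
    intro j
    rw [← hQjconj j (d-1)]
    rw [show (Qj j : Matrix (Fin N) (Fin N) ℂ) = Vi^j * Q * V^j from rfl, hsand, hT0]
    simp
  have hOrth : ∀ j k, 1 ≤ k → k ≤ d - 1 → Qj (k+j) * Qj j = 0 := by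
    intro j k hk1 hk2
    by_cases hk3 : k + 2 ≤ d
    · exact hOrthGen j k hk1 hk3
    · rw [show k = d-1 from by omega]
      exact hOrthLast j
  -- commutation relations
  have hQmod : ∀ j, Qj j = Qj (j % d) := by
    intro j
    induction j using Nat.strong_induction_on with
    | _ j ih =>
      by_cases hj : j < d
      · rw [Nat.mod_eq_of_lt hj]
      · have hjd : j = (j - d) + d := by omega
        rw [hjd, Nat.add_mod_right, hQjper (j-d), ih (j-d) (by omega)]
  have hQcomm : ∀ j, Q * Qj j = Qj j * Q := by
    intro j
    rcases Nat.eq_zero_or_pos (j % d) with h0 | hpos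
    · rw [hQmod j, h0, hQj0]
    · have hlt : j % d < d := Nat.mod_lt _ (by omega)
      have h1 : Qj (j % d) * Q = 0 := by
        have h := hOrth 0 (j % d) hpos (by omega)
        rw [add_zero, hQj0] at h
        exact h
      have h2 : Q * Qj (j % d) = 0 := by
        have h := hOrth (j % d) (d - j % d) (by omega) (by omega)
        rw [show d - j % d + j % d = d from by omega] at h
        have hQd : Qj d = Q := by
          rw [show d = 0 + d from (Nat.zero_add d).symm, hQjper 0, hQj0]
        rwa [hQd] at h
      rw [hQmod j, h1, h2]
  have hZQj : ∀ j, Z * Qj j = Qj j * Z := by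
    intro j
    rw [hZ1Q, add_mul, mul_add, one_mul, mul_one, smul_mul_assoc, mul_smul_comm, hQcomm j]
  have hQV : ∀ j, V * Qj (j+1) = Qj j * V := by
    intro j
    show V * (Vi^(j+1) * Q * V^(j+1)) = Vi^j * Q * V^j * V
    calc V * (Vi^(j+1) * Q * V^(j+1)) = (V * Vi) * (Vi^j * Q * (V^j * V)) := by
          rw [pow_succ' Vi j, pow_succ V j]; simp only [mul_assoc]
      _ = Vi^j * Q * V^j * V := by rw [hVVi, one_mul]; simp only [mul_assoc]
  have hQU : ∀ j, U * Qj (j+1) = Qj j * U := by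
    intro j
    calc U * Qj (j+1) = V * (Z * Qj (j+1)) := by rw [hUVZ, mul_assoc]
      _ = V * (Qj (j+1) * Z) := by rw [hZQj (j+1)]
      _ = (V * Qj (j+1)) * Z := (mul_assoc V (Qj (j+1)) Z).symm
      _ = (Qj j * V) * Z := by rw [hQV j]
      _ = Qj j * U := by rw [mul_assoc (Qj j) V Z, ← hUVZ]
  have hQUn : ∀ (n' : ℕ), ∀ j, U^n' * Qj (j+n') = Qj j * U^n' := by
    intro n'
    induction n' with
    | zero => intro j; simp
    | succ n' ih =>
      intro j
      calc U^(n'+1) * Qj (j+(n'+1)) = U^n' * (U * Qj ((j+n')+1)) := by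
            rw [pow_succ U n', mul_assoc (U^n') U, Nat.add_assoc j n' 1]
        _ = U^n' * (Qj (j+n') * U) := by rw [hQU (j+n')]
        _ = (U^n' * Qj (j+n')) * U := (mul_assoc (U^n') (Qj (j+n')) U).symm
        _ = Qj j * U^(n'+1) := by
            rw [ih j, pow_succ U n', mul_assoc (Qj j) (U^n') U]
  have hQVn : ∀ (n' : ℕ), ∀ j, V^n' * Qj (j+n') = Qj j * V^n' := by
    intro n'
    induction n' with
    | zero => intro j; simp
    | succ n' ih =>
      intro j
      calc V^(n'+1) * Qj (j+(n'+1)) = V^n' * (V * Qj ((j+n')+1)) := by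
            rw [pow_succ V n', mul_assoc (V^n') V, Nat.add_assoc j n' 1]
        _ = V^n' * (Qj (j+n') * V) := by rw [hQV (j+n')]
        _ = (V^n' * Qj (j+n')) * V := (mul_assoc (V^n') (Qj (j+n')) V).symm
        _ = Qj j * V^(n'+1) := by
            rw [ih j, pow_succ V n', mul_assoc (Qj j) (V^n') V]
  -- the trace argument
  intro n hn1 hnd
  have hkey : ∀ (X : Matrix (Fin N) (Fin N) ℂ),
      (∀ j, X * Qj (j+n) = Qj j * X) → X.trace = 0 := by
    intro X hX
    have h1 : X.trace = (X * S d).trace := by rw [hSd1, mul_one]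
    rw [h1]
    simp only [hSdef, Finset.mul_sum]
    rw [trace_sum]
    apply Finset.sum_eq_zero
    intro j hj
    calc (X * Qj j).trace = (X * (Qj j * Qj j)).trace := by rw [hQjidem j]
      _ = ((X * Qj j) * Qj j).trace := by rw [mul_assoc X (Qj j) (Qj j)]
      _ = (Qj j * (X * Qj j)).trace := trace_mul_comm _ _
      _ = ((Qj j * X) * Qj j).trace := by rw [mul_assoc (Qj j) X (Qj j)]
      _ = ((X * Qj (j+n)) * Qj j).trace := by rw [hX j]
      _ = (X * (Qj (j+n) * Qj j)).trace := by rw [mul_assoc X (Qj (j+n)) (Qj j)]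
      _ = (0 : Matrix (Fin N) (Fin N) ℂ).trace := by
          have h := hOrth j n hn1 (by omega)
          rw [Nat.add_comm n j] at h
          rw [h, mul_zero]
      _ = 0 := by simp
  exact ⟨hkey (U^n) (hQUn n), hkey (V^n) (hQVn n)⟩

end Aux

section Stmt

open Complex Finset

/-- Under the relations (i) Ābar^{(k)} Ābar^{(d−k)} = 1 and
(ii) Ābar^{(k)} = (Ābar^{(1)})^k, every proper divisor power of A and B is traceless. -/
theorem stmt1 (d m N : ℕ) (hd : 2 ≤ d) (hm : 2 ≤ m) (hN : 1 ≤ N)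
    (A B : Matrix (Fin N) (Fin N) ℂ)
    (hA : A ∈ Matrix.unitaryGroup (Fin N) ℂ) (hB : B ∈ Matrix.unitaryGroup (Fin N) ℂ)
    (hAd : A ^ d = 1) (hBd : B ^ d = 1)
    (hrel1 : ∀ k, 1 ≤ k → k ≤ d - 1 → abar d m A B k * abar d m A B (d - k) = 1)
    (hrel2 : ∀ k, 1 ≤ k → k ≤ d - 1 → abar d m A B k = (abar d m A B 1) ^ k) :
    ∀ n : ℕ, 0 < n → n ∣ d → n ≠ d → (A ^ n).trace = 0 ∧ (B ^ n).trace = 0 := by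
  have hdR : (d:ℝ) ≠ 0 := by positivity
  have hmR : (m:ℝ) ≠ 0 := by positivity
  set t₀ : ℝ := Real.pi / (2*m*d) with ht₀
  set γ : ℂ := Efun t₀ with hγ
  set s : ℂ := ((2 * Real.cos (Real.pi / (2 * m)) : ℝ) : ℂ) with hs
  have hγ0 : γ ≠ 0 := hEne t₀
  have hzz : ∀ a b : ℤ, γ^a * γ^b = γ^(a+b) := fun a b => (zpow_add₀ hγ0 a b).symm
  have hzeq : ∀ a b : ℤ, a = b → γ^a = γ^b := fun a b h => by rw [h]
  have hγz : ∀ n : ℤ, γ^n = Efun (n*t₀) := fun n => hEz n t₀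
  have hdt : Real.pi/(2*m) = (d:ℝ)*t₀ := by rw [ht₀]; field_simp
  have hscos : s = γ^(d:ℤ) + γ^(-(d:ℤ)) := by
    rw [hs, h2cos, hγz, hγz, hdt]
    congr 2 <;> push_cast <;> ring
  have hsne : s ≠ 0 := by
    rw [hs]
    have hcos : 0 < Real.cos (Real.pi/(2*m)) := by
      apply Real.cos_pos_of_mem_Ioo
      constructor
      · have := Real.pi_pos
        have h1 : 0 < Real.pi/(2*m) := by positivity
        linarith
      · have := Real.pi_pos
        have h2m : (2:ℝ) < 2*m := by
          have : (2:ℝ) ≤ (m:ℝ) := by exact_mod_cast hm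
          nlinarith
        calc Real.pi/(2*m) < Real.pi/2 := by
              apply div_lt_div_of_pos_left Real.pi_pos (by norm_num) h2m
          _ = Real.pi/2 := rfl
    exact Complex.ofReal_ne_zero.mpr (by positivity)
  have hacoefz : ∀ k : ℕ, acoef d m k = γ^(2*(k:ℤ)-(d:ℤ))/s := by
    intro k
    have h1 : acoef d m k = Efun (2*Real.pi*((2*(k:ℝ)-d)/(4*m))/d) / s := rfl
    rw [h1, hγz]
    congr 2
    rw [ht₀]
    push_cast
    field_simp
    ring
  have hconjz : ∀ k : ℕ, (starRingEnd ℂ) (acoef d m k) = γ^((d:ℤ)-2*(k:ℤ))/s := by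
    intro k
    rw [hacoefz k, map_div₀, hs, Complex.conj_ofReal, hγz, hconjE, ← hs, hγz]
    congr 2
    push_cast
    ring
  have hss : s*s = γ^(2*(d:ℤ)) + γ^(-(2*(d:ℤ))) + 2 := by
    rw [hscos, add_mul, mul_add, mul_add, hzz, hzz, hzz, hzz,
      hzeq ((d:ℤ)+-(d:ℤ)) 0 (by ring), hzeq (-(d:ℤ)+(d:ℤ)) 0 (by ring),
      hzeq ((d:ℤ)+(d:ℤ)) (2*d) (by ring), hzeq (-(d:ℤ)+-(d:ℤ)) (-(2*(d:ℤ))) (by ring),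
      zpow_zero]
    ring
  have hexp : ∀ (k l : ℕ) (e₁ e₂ e₃ e₄ : ℤ),
      e₁ = (2*(k:ℤ)-d) + (2*(l:ℤ)-d) → e₂ = (2*(k:ℤ)-d) + ((d:ℤ)-2*l) →
      e₃ = ((d:ℤ)-2*k) + (2*(l:ℤ)-d) → e₄ = ((d:ℤ)-2*k) + ((d:ℤ)-2*l) →
      (s*s) • (abar d m A B k * abar d m A B l)
        = γ^e₁ • (A^k*A^l) + γ^e₂ • (A^k*B^l) + γ^e₃ • (B^k*A^l) + γ^e₄ • (B^k*B^l) := by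
    intro k l e₁ e₂ e₃ e₄ he₁ he₂ he₃ he₄
    have hco : ∀ (a b e : ℤ), e = a + b → (s*s) * (γ^a/s * (γ^b/s)) = γ^e := by
      intro a b e he
      rw [he, ← hzz a b]
      field_simp
      try ring
    rw [abar, abar, hconjz, hconjz, hacoefz, hacoefz, add_mul, mul_add, mul_add,
      smul_mul_smul_comm, smul_mul_smul_comm, smul_mul_smul_comm, smul_mul_smul_comm]
    simp only [smul_add, smul_smul]
    rw [hco _ _ _ he₁, hco _ _ _ he₂, hco _ _ _ he₃, hco _ _ _ he₄]
    abel
  have hsingle : ∀ (j:ℕ) (e₁ e₂ e₃ e₄ : ℤ), e₁ = 2*(j:ℤ) → e₂ = 2*(j:ℤ)-2*d →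
      e₃ = 2*(d:ℤ)-2*j → e₄ = -(2*(j:ℤ)) →
      (s*s) • abar d m A B j = (γ^e₁+γ^e₂) • A^j + (γ^e₃+γ^e₄) • B^j := by
    intro j e₁ e₂ e₃ e₄ he₁ he₂ he₃ he₄
    have hco1 : ∀ (a e e' : ℤ), e = (d:ℤ) + a → e' = -(d:ℤ) + a →
        (s*s) * (γ^a/s) = γ^e + γ^e' := by
      intro a e e' he he'
      have h1 : (s*s) * (γ^a/s) = s * γ^a := by field_simp
      rw [h1, hscos, add_mul, hzz, hzz, hzeq ((d:ℤ)+a) e he.symm,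
        hzeq (-(d:ℤ)+a) e' he'.symm]
    rw [abar, hconjz, hacoefz, smul_add, smul_smul, smul_smul,
      hco1 (2*(j:ℤ)-(d:ℤ)) e₁ e₂ (by omega) (by omega),
      hco1 ((d:ℤ)-2*(j:ℤ)) e₃ e₄ (by omega) (by omega)]
  -- relation (i) at k = d-1, in γ-form
  have hgam1 : γ^(2*(d:ℤ)-4) • (A^(d-1)*B) + γ^(4-2*(d:ℤ)) • (B^(d-1)*A)
      = (γ^(2*(d:ℤ)) + γ^(-(2*(d:ℤ)))) • (1 : Matrix (Fin N) (Fin N) ℂ) := by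
    have h0 := hrel1 (d-1) (by omega) (by omega)
    rw [show d - (d-1) = 1 from by omega] at h0
    have h : (s*s) • (abar d m A B (d-1) * abar d m A B 1)
        = (s*s) • (1 : Matrix (Fin N) (Fin N) ℂ) := by rw [h0]
    rw [hexp (d-1) 1 0 (2*(d:ℤ)-4) (4-2*(d:ℤ)) 0
      (by omega) (by omega) (by omega) (by omega)] at h
    rw [pow_one, pow_one] at h
    rw [show A^(d-1)*A = A^d from by rw [← pow_succ, Nat.sub_add_cancel (by omega : 1 ≤ d)],
      show B^(d-1)*B = B^d from by rw [← pow_succ, Nat.sub_add_cancel (by omega : 1 ≤ d)],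
      hAd, hBd, hss, zpow_zero, one_smul] at h
    have h2 : γ^(2*(d:ℤ)-4) • (A^(d-1)*B) + γ^(4-2*(d:ℤ)) • (B^(d-1)*A)
        = ((γ^(2*(d:ℤ)) + γ^(-(2*(d:ℤ))) + 2) • (1 : Matrix (Fin N) (Fin N) ℂ)) - 1 - 1 := by
      rw [← h]; abel
    rw [h2]; module
  -- relation (ii), in γ-form
  have hRgam : ∀ k:ℕ, 1 ≤ k → k + 2 ≤ d →
      γ^(2*(k:ℤ)-2) • (A^k*B) + γ^(2-2*(k:ℤ)) • (B^k*A)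
      = γ^(2*(k:ℤ)+2) • A^(k+1) + γ^(-(2*(k:ℤ))-2) • B^(k+1) := by
    intro k hk1 hk2
    have e1 := hrel2 k hk1 (by omega)
    have e2 := hrel2 (k+1) (by omega) (by omega)
    have e3 : abar d m A B (k+1) = abar d m A B k * abar d m A B 1 := by
      rw [e2, pow_succ, ← e1]
    have h : (s*s) • abar d m A B (k+1)
        = (s*s) • (abar d m A B k * abar d m A B 1) := by rw [e3]
    rw [hexp k 1 (2*(k:ℤ)+2-2*d) (2*(k:ℤ)-2) (2-2*(k:ℤ)) (2*(d:ℤ)-2*k-2)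
      (by omega) (by omega) (by omega) (by omega)] at h
    rw [hsingle (k+1) (2*(k:ℤ)+2) (2*(k:ℤ)+2-2*d) (2*(d:ℤ)-2*k-2) (-(2*(k:ℤ))-2)
      (by omega) (by omega) (by omega) (by omega)] at h
    rw [pow_one, pow_one, ← pow_succ A k, ← pow_succ B k] at h
    have h2 : γ^(2*(k:ℤ)-2) • (A^k*B) + γ^(2-2*(k:ℤ)) • (B^k*A)
        = ((γ^(2*(k:ℤ)+2)+γ^(2*(k:ℤ)+2-2*d)) • A^(k+1)
            + (γ^(2*(d:ℤ)-2*k-2)+γ^(-(2*(k:ℤ))-2)) • B^(k+1))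
          - γ^(2*(k:ℤ)+2-2*d) • A^(k+1) - γ^(2*(d:ℤ)-2*k-2) • B^(k+1) := by
      rw [h]; abel
    rw [h2]; module
  -- the rescaled matrices
  set U : Matrix (Fin N) (Fin N) ℂ := γ^(2:ℤ) • A with hU
  set V : Matrix (Fin N) (Fin N) ℂ := γ^(-2:ℤ) • B with hV
  have hUp : ∀ j:ℕ, U^j = γ^(2*(j:ℤ)) • A^j := by
    intro j
    rw [hU, smul_pow]
    congr 1
    rw [← zpow_natCast (γ^(2:ℤ)) j, ← _root_.zpow_mul]
    try exact hzeq _ _ (by ring)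
  have hVp : ∀ j:ℕ, V^j = γ^(-(2*(j:ℤ))) • B^j := by
    intro j
    rw [hV, smul_pow]
    congr 1
    rw [← zpow_natCast (γ^(-2:ℤ)) j, ← _root_.zpow_mul]
    try exact hzeq _ _ (by ring)
  have hζ0' : γ^(2*(d:ℤ)) ≠ 0 := zpow_ne_zero _ hγ0
  have hUd' : U^d = γ^(2*(d:ℤ)) • 1 := by rw [hUp d, hAd]
  have hVd' : V^d = (γ^(2*(d:ℤ)))⁻¹ • 1 := by
    rw [hVp d, hBd, ← _root_.zpow_neg]
  have hg1' : (γ^(2*(d:ℤ)))^2 ≠ 1 := by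
    have hsq : (γ^(2*(d:ℤ)))^2 = Efun (2*Real.pi/m) := by
      rw [sq, hzz, hγz]
      congr 1
      rw [ht₀]
      push_cast
      field_simp
      ring
    rw [hsq]
    intro hone
    rw [Efun, Complex.exp_eq_one_iff] at hone
    obtain ⟨n, hn⟩ := hone
    have h3 := congrArg Complex.im hn
    simp [Complex.mul_im] at h3
    have hπ : Real.pi > 0 := Real.pi_pos
    have h4 : (n:ℝ) * m = 1 := by
      field_simp at h3
      nlinarith [h3]
    have h5 : (n:ℤ) * m = 1 := by exact_mod_cast h4
    have h6 : (m:ℤ) ≤ 1 := Int.le_of_dvd one_pos ⟨n, by linarith⟩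
    omega
  have hH1c : U^(d-1)*V + V^(d-1)*U
      = (γ^(2*(d:ℤ)) + (γ^(2*(d:ℤ)))⁻¹) • (1:Matrix (Fin N) (Fin N) ℂ) := by
    rw [hUp (d-1), hVp (d-1), hU, hV, smul_mul_smul_comm, smul_mul_smul_comm, hzz, hzz,
      hzeq (2*((d-1:ℕ):ℤ)+(-2)) (2*(d:ℤ)-4) (by omega),
      hzeq (-(2*((d-1:ℕ):ℤ))+2) (4-2*(d:ℤ)) (by omega),
      hgam1, ← _root_.zpow_neg]
  have hRc : ∀ k, 1 ≤ k → k+2 ≤ d → U^k*V + V^k*U = U^(k+1)+V^(k+1) := by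
    intro k hk1 hk2
    rw [hUp k, hVp k, hUp (k+1), hVp (k+1), hU, hV,
      smul_mul_smul_comm, smul_mul_smul_comm, hzz, hzz,
      hzeq (2*(k:ℤ)+(-2)) (2*(k:ℤ)-2) (by ring),
      hzeq (-(2*(k:ℤ))+2) (2-2*(k:ℤ)) (by ring),
      hzeq (2*((k+1:ℕ):ℤ)) (2*(k:ℤ)+2) (by omega),
      hzeq (-(2*((k+1:ℕ):ℤ))) (-(2*(k:ℤ))-2) (by omega),
      hRgam k hk1 hk2]
  -- apply the core lemma
  have hmain := core d hd U V (γ^(2*(d:ℤ))) hζ0' hg1' hUd' hVd' hH1c hRc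
  intro n hn0 hndvd hne
  have hnd : n < d := lt_of_le_of_ne (Nat.le_of_dvd (by omega) hndvd) hne
  obtain ⟨hTU, hTV⟩ := hmain n hn0 hnd
  constructor
  · have hA' : A^n = γ^(-(2*(n:ℤ))) • U^n := by
      rw [hUp n, smul_smul, hzz, hzeq (-(2*(n:ℤ))+2*(n:ℤ)) 0 (by ring), zpow_zero, one_smul]
    rw [hA', trace_smul, hTU, smul_zero]
  · have hB' : B^n = γ^(2*(n:ℤ)) • V^n := by
      rw [hVp n, smul_smul, hzz, hzeq (2*(n:ℤ)+(-(2*(n:ℤ)))) 0 (by ring), zpow_zero, one_smul]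
    rw [hB', trace_smul, hTV, smul_zero]

end Stmt
end

section
/- Under the stated relations, for every k = 1,…,d−1 one has ω^{(2k−d)/(2m)} A^k B^{d−k} + ω^{−(2k−d)/(2m)} B^k A^{d−k} = 2 cos(π/m) · 1, where 1 denotes the N×N identity matrix (note B^{d−k} = B^{−k} and A^{d−k} = A^{−k} since A^d = B^d = 1). -/
open Matrix

lemma omg_mul (d : ℕ) (s t : ℝ) : omg d s * omg d t = omg d (s + t) := by
  unfold omg
  rw [← Complex.exp_add]
  congr 1
  push_cast
  ring

lemma omg_conj (d : ℕ) (t : ℝ) : (starRingEnd ℂ) (omg d t) = omg d (-t) := by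
  unfold omg
  rw [← Complex.exp_conj, _root_.map_mul, Complex.conj_ofReal, Complex.conj_I]
  congr 1
  push_cast
  ring

lemma omg_zero (d : ℕ) : omg d 0 = 1 := by
  unfold omg
  simp

lemma omg_arg (d : ℕ) (s t : ℝ) (h : s = t) : omg d s = omg d t := by rw [h]

/-- ω^{(2k−d)/(2m)} A^k B^{d−k} + ω^{−(2k−d)/(2m)} B^k A^{d−k} = 2cos(π/m)·1. -/
theorem stmt2 (d m N : ℕ) (hd : 2 ≤ d) (hm : 2 ≤ m) (hN : 1 ≤ N)
    (A B : Matrix (Fin N) (Fin N) ℂ)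
    (hA : A ∈ Matrix.unitaryGroup (Fin N) ℂ) (hB : B ∈ Matrix.unitaryGroup (Fin N) ℂ)
    (hAd : A ^ d = 1) (hBd : B ^ d = 1)
    (hrel1 : ∀ k, 1 ≤ k → k ≤ d - 1 → abar d m A B k * abar d m A B (d - k) = 1)
    (hrel2 : ∀ k, 1 ≤ k → k ≤ d - 1 → abar d m A B k = (abar d m A B 1) ^ k) :
    ∀ k : ℕ, 1 ≤ k → k ≤ d - 1 →
      omg d ((2 * (k : ℝ) - d) / (2 * m)) • (A ^ k * B ^ (d - k)) +
        omg d (-((2 * (k : ℝ) - d) / (2 * m))) • (B ^ k * A ^ (d - k)) =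
      ((2 * Real.cos (Real.pi / m) : ℝ) : ℂ) • (1 : Matrix (Fin N) (Fin N) ℂ) := by
  intro k hk1 hk2
  have hm0 : (0:ℝ) < m := by positivity
  have hkd : k ≤ d := le_trans hk2 (Nat.sub_le d 1)
  have hc : 0 < Real.cos (Real.pi / (2 * m)) := by
    apply Real.cos_pos_of_mem_Ioo
    constructor
    · have h1 : 0 < Real.pi / (2 * m) := by positivity
      have := Real.pi_pos
      linarith
    · have hm2 : (2:ℝ) ≤ m := by exact_mod_cast hm
      have h22 : (2:ℝ) < 2 * m := by linarith
      exact div_lt_div_of_pos_left Real.pi_pos (by norm_num) h22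
  set c := Real.cos (Real.pi / (2 * m)) with hc_def
  set s : ℂ := ((2 * c : ℝ) : ℂ) with hs_def
  have hs : s ≠ 0 := by
    rw [hs_def]
    exact_mod_cast ne_of_gt (by linarith)
  have hss : s * s ≠ 0 := mul_ne_zero hs hs
  have hsum : k + (d - k) = d := Nat.add_sub_cancel' hkd
  have hAdk : A ^ k * A ^ (d - k) = 1 := by rw [← pow_add, hsum, hAd]
  have hBdk : B ^ k * B ^ (d - k) = 1 := by rw [← pow_add, hsum, hBd]
  have hcast : ((d - k : ℕ) : ℝ) = (d : ℝ) - k := by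
    push_cast [Nat.cast_sub hkd]; ring
  set a := acoef d m k with ha_def
  have hconj : acoef d m (d - k) = (starRingEnd ℂ) a := by
    rw [ha_def]
    unfold acoef
    rw [map_div₀, omg_conj, Complex.conj_ofReal]
    congr 1
    apply omg_arg
    rw [hcast]; ring
  set t := (2 * (k : ℝ) - d) / (4 * m) with ht_def
  have ha : a = omg d t / s := rfl
  have hca : (starRingEnd ℂ) a = omg d (-t) / s := by
    rw [ha, map_div₀, omg_conj, hs_def, Complex.conj_ofReal]
  have h1 : a * (starRingEnd ℂ) a = 1 / (s * s) := by
    rw [hca, ha, div_mul_div_comm, omg_mul]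
    congr 1
    rw [add_neg_cancel, omg_zero]
  have h2 : a * a = omg d ((2 * (k : ℝ) - d) / (2 * m)) / (s * s) := by
    rw [ha, div_mul_div_comm, omg_mul]
    congr 1
    apply omg_arg
    rw [ht_def]; ring
  have h3 : (starRingEnd ℂ) a * (starRingEnd ℂ) a
      = omg d (-((2 * (k : ℝ) - d) / (2 * m))) / (s * s) := by
    rw [hca, div_mul_div_comm, omg_mul]
    congr 1
    apply omg_arg
    rw [ht_def]; ring
  have key := hrel1 k hk1 hk2
  rw [abar, abar, hconj, ← ha_def, Complex.conj_conj] at key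
  rw [add_mul, mul_add, mul_add, smul_mul_smul_comm, smul_mul_smul_comm, smul_mul_smul_comm,
    smul_mul_smul_comm, hAdk, hBdk] at key
  rw [h1, h2, h3, mul_comm ((starRingEnd ℂ) a) a, h1] at key
  have key2 := congrArg (fun M => (s * s) • M) key
  simp only [smul_add, smul_smul, smul_eq_mul] at key2
  have hcanc : ∀ z : ℂ, s * s * (z / (s * s)) = z := fun z => mul_div_cancel₀ z hss
  rw [hcanc, hcanc, hcanc] at key2
  simp only [one_smul] at key2
  have hfin : (2 * Real.cos (Real.pi / m) : ℝ) = (2 * c) * (2 * c) - 2 := by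
    have h2m : 2 * (Real.pi / (2 * m)) = Real.pi / m := by
      field_simp
    rw [hc_def, ← h2m, Real.cos_two_mul]
    ring
  have hsc : ((2 * Real.cos (Real.pi / m) : ℝ) : ℂ) = s * s - 2 := by
    rw [hfin, hs_def]
    push_cast
    ring
  rw [hsc, sub_smul]
  have : omg d ((2 * (k : ℝ) - d) / (2 * m)) • (A ^ k * B ^ (d - k)) +
      omg d (-((2 * (k : ℝ) - d) / (2 * m))) • (B ^ k * A ^ (d - k)) =
      ((1 : Matrix (Fin N) (Fin N) ℂ) +
        omg d ((2 * (k : ℝ) - d) / (2 * m)) • (A ^ k * B ^ (d - k)) +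
        (omg d (-((2 * (k : ℝ) - d) / (2 * m))) • (B ^ k * A ^ (d - k)) + 1)) -
      (2 : ℂ) • (1 : Matrix (Fin N) (Fin N) ℂ) := by
    rw [two_smul]; abel
  rw [this, key2, two_smul]
end

section
/- Under the stated relations, for every k = 1,…,⌊d/2⌋ one has Tr(A^k) = ω^{−k/m} Tr(B^k). -/
open Matrix

/-! Write `a = a_k`, `s = Tr B^k`, `t = Tr A^k` and `g = Tr (A^{2k} B^{d-k})`. Multiplying
relation (i) at `k` by `A^k`, and the relation `(Ābar^{(k)})² = Ābar^{(2k)}` by `B^{d-k}`, then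
taking traces, gives two linear equations in `t`, `s`, `g`; when `2k = d` the second relation is
(i) itself, because `Ābar^{(d)} = 1`. With `p = e^{iπ/(2m)}` and `c = p + p̄ = 2 cos (π/(2m))` one
has `a_{d-k} = ā`, `c² |a|² = 1` and `a_{2k} = c p a²`; eliminating `g` then leaves
`p (1 - p²) (t - ω^{-k/m} s) = 0`, and `p² ≠ 1` since `m ≠ 0`. -/

lemma eq_of_pencil_relations {K : Type*} [Field K] {p q c a b t s g : K} (hpq : p * q = 1)
    (hc : p + q = c) (hp : p ^ 2 ≠ 1) (hab : c ^ 2 * (a * b) = 1)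
    (h₁ : a ^ 2 * g + 2 * a * b * t + b ^ 2 * s = t)
    (h₂ : a ^ 2 * g + 2 * a * b * t + b ^ 2 * s = c * p * a ^ 2 * g + c * q * b ^ 2 * s) :
    t = (c * b * q) ^ 2 * s := by
  have elim_g : (c - c ^ 2 * p + 2 * p) * t = c ^ 2 * (q - p) * b ^ 2 * s := by
    linear_combination c * (h₂ - h₁) + c ^ 2 * p * h₁ - 2 * p * t * hab
  subst hc
  have lhs : p + q - (p + q) ^ 2 * p + 2 * p = p * (1 - p ^ 2) := by
    linear_combination (-2 * p - q) * hpq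
  have rhs : (p + q) ^ 2 * (q - p) * b ^ 2 * s
      = p * (1 - p ^ 2) * (((p + q) * b * q) ^ 2 * s) := by
    linear_combination (p + q) ^ 2 * b ^ 2 * s * (p * (p * q + 1) - q) * hpq
  rw [lhs, rhs] at elim_g
  refine mul_left_cancel₀ (mul_ne_zero (left_ne_zero_of_mul_eq_one hpq) ?_) elim_g
  exact sub_ne_zero.2 (Ne.symm hp)

section Pencil

variable {n R : Type*} [Fintype n] [DecidableEq n] [CommRing R] {A B : Matrix n n R} {d k : ℕ}

lemma trace_pow_mul_of_pencil_mul_eq_one (hAd : A ^ d = 1) (hBd : B ^ d = 1) (hk : k ≤ d)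
    {a b : R} (h : (a • A ^ k + b • B ^ k) * (b • A ^ (d - k) + a • B ^ (d - k)) = 1) :
    a ^ 2 * trace (A ^ (2 * k) * B ^ (d - k)) + 2 * a * b * trace (A ^ k)
      + b ^ 2 * trace (B ^ k) = trace (A ^ k) := by
  have hA : A ^ k * A ^ (d - k) = 1 := by rw [pow_mul_pow_sub A hk, hAd]
  have hB : B ^ k * B ^ (d - k) = 1 := by rw [pow_mul_pow_sub B hk, hBd]
  have hBA : trace (A ^ k * (B ^ k * A ^ (d - k))) = trace (B ^ k) := by
    rw [trace_mul_comm, mul_assoc, pow_sub_mul_pow A hk, hAd, mul_one]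
  have h2k : A ^ k * (A ^ k * B ^ (d - k)) = A ^ (2 * k) * B ^ (d - k) := by
    rw [← mul_assoc, ← pow_add, two_mul]
  have := congrArg (fun M => trace (A ^ k * M)) h
  simp only [mul_add, add_mul, smul_mul_assoc, mul_smul_comm, trace_add,
    trace_smul, smul_eq_mul, mul_one, hA, hB, hBA, h2k] at this
  linear_combination this

lemma trace_pow_mul_of_pencil_sq_eq (hBd : B ^ d = 1) (hk : k ≤ d) {a b a' b' : R}
    (h : (a • A ^ k + b • B ^ k) ^ 2 = a' • A ^ (2 * k) + b' • B ^ (2 * k)) :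
    a ^ 2 * trace (A ^ (2 * k) * B ^ (d - k)) + 2 * a * b * trace (A ^ k)
      + b ^ 2 * trace (B ^ k) = a' * trace (A ^ (2 * k) * B ^ (d - k)) + b' * trace (B ^ k) := by
  have hB : B ^ k * B ^ (d - k) = 1 := by rw [pow_mul_pow_sub B hk, hBd]
  have hAB : trace (B ^ k * (A ^ k * B ^ (d - k))) = trace (A ^ k) := by
    rw [← mul_assoc, trace_mul_comm, ← mul_assoc, pow_sub_mul_pow B hk, hBd, one_mul]
  have hB2k : B ^ (2 * k) * B ^ (d - k) = B ^ k := by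
    rw [two_mul, pow_add, mul_assoc, hB, mul_one]
  have := congrArg (fun M => trace (M * B ^ (d - k))) h
  simp only [sq, mul_add, add_mul, smul_mul_assoc, mul_smul_comm, trace_add,
    trace_smul, smul_eq_mul, mul_assoc, hB, mul_one, hB2k, hAB, ← pow_add, ← two_mul] at this
  linear_combination this

end Pencil

section Omg
variable {d m : ℕ}

lemma omg_add (d : ℕ) (s t : ℝ) : omg d (s + t) = omg d s * omg d t := by
  rw [omg, omg, omg, ← Complex.exp_add]
  push_cast
  ring_nf

lemma conj_omg (d : ℕ) (t : ℝ) : starRingEnd ℂ (omg d t) = omg d (-t) := by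
  rw [omg, omg, ← Complex.exp_conj, map_mul, Complex.conj_ofReal, Complex.conj_I]
  push_cast
  ring_nf

lemma omg_mul_omg_neg (d : ℕ) (t : ℝ) : omg d t * omg d (-t) = 1 := by
  rw [← omg_add, add_neg_cancel, omg, mul_zero, zero_div, Complex.ofReal_zero, zero_mul,
    Complex.exp_zero]

lemma omg_div_four_mul (hd : d ≠ 0) (m : ℕ) :
    omg d (d / (4 * m)) = Complex.exp (↑(Real.pi / (2 * m)) * Complex.I) := by
  rw [omg]
  congr 3
  field_simp
  ring

lemma omg_div_four_mul_add_conj (hd : d ≠ 0) (m : ℕ) :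
    omg d (d / (4 * m)) + starRingEnd ℂ (omg d (d / (4 * m)))
      = ((2 * Real.cos (Real.pi / (2 * m)) : ℝ) : ℂ) := by
  rw [Complex.add_conj, omg_div_four_mul hd, Complex.exp_ofReal_mul_I_re]

lemma omg_div_four_mul_sq_ne_one (hd : d ≠ 0) (hm : m ≠ 0) : omg d (d / (4 * m)) ^ 2 ≠ 1 := by
  rw [omg_div_four_mul hd, ← Complex.exp_nat_mul]
  convert (Complex.isPrimitiveRoot_exp (2 * m) (by omega)).ne_one (by omega) using 2
  push_cast
  ring

lemma two_cos_pi_div_two_mul_ne_zero (hm : 2 ≤ m) :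
    ((2 * Real.cos (Real.pi / (2 * m)) : ℝ) : ℂ) ≠ 0 := by
  have hm' : (2 : ℝ) ≤ m := by exact_mod_cast hm
  have hpos : 0 < Real.pi / (2 * m) := by positivity
  have hlt : Real.pi / (2 * m) < Real.pi / 2 :=
    div_lt_div_of_pos_left Real.pi_pos (by norm_num) (by linarith)
  exact_mod_cast mul_ne_zero two_ne_zero (Real.cos_pos_of_mem_Ioo ⟨by linarith, hlt⟩).ne'

end Omg

section Acoef
variable {d m : ℕ}

lemma conj_acoef {k : ℕ} (hk : k ≤ d) : starRingEnd ℂ (acoef d m k) = acoef d m (d - k) := by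
  rw [acoef, acoef, map_div₀, conj_omg, Complex.conj_ofReal, Nat.cast_sub hk]
  ring_nf

lemma sq_mul_acoef_mul_conj (hm : 2 ≤ m) (k : ℕ) :
    ((2 * Real.cos (Real.pi / (2 * m)) : ℝ) : ℂ) ^ 2
      * (acoef d m k * starRingEnd ℂ (acoef d m k)) = 1 := by
  have hc := two_cos_pi_div_two_mul_ne_zero hm
  rw [acoef, map_div₀, conj_omg, Complex.conj_ofReal]
  field_simp
  exact omg_mul_omg_neg d _

lemma acoef_two_mul (hm : 2 ≤ m) (k : ℕ) :
    acoef d m (2 * k) =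
      ((2 * Real.cos (Real.pi / (2 * m)) : ℝ) : ℂ) * omg d (d / (4 * m)) * acoef d m k ^ 2 := by
  have hc := two_cos_pi_div_two_mul_ne_zero hm
  rw [acoef, acoef, show (2 * ((2 * k : ℕ) : ℝ) - d) / (4 * m)
      = (2 * (k : ℝ) - d) / (4 * m) + ((2 * (k : ℝ) - d) / (4 * m) + d / (4 * m)) by
        push_cast; ring,
    omg_add, omg_add]
  field_simp

lemma omg_neg_div_eq (hm : 2 ≤ m) (k : ℕ) :
    omg d (-(k / m)) = (((2 * Real.cos (Real.pi / (2 * m)) : ℝ) : ℂ)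
      * starRingEnd ℂ (acoef d m k) * starRingEnd ℂ (omg d (d / (4 * m)))) ^ 2 := by
  have hc := two_cos_pi_div_two_mul_ne_zero hm
  have hm0 : (m : ℝ) ≠ 0 := by positivity
  rw [acoef, map_div₀, conj_omg, conj_omg, Complex.conj_ofReal, mul_div_cancel₀ _ hc,
    ← omg_add, sq, ← omg_add]
  congr 1
  field_simp
  ring

end Acoef

section Abar
variable {n : Type*} [Fintype n] [DecidableEq n] {d m : ℕ} {A B : Matrix n n ℂ}

lemma abar_sub_eq {k : ℕ} (hk : k ≤ d) : abar d m A B (d - k)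
    = starRingEnd ℂ (acoef d m k) • A ^ (d - k) + acoef d m k • B ^ (d - k) := by
  rw [abar, ← conj_acoef hk, Complex.conj_conj]

lemma abar_self (hd : d ≠ 0) (hm : 2 ≤ m) (hAd : A ^ d = 1) (hBd : B ^ d = 1) :
    abar d m A B d = 1 := by
  have h : acoef d m d + starRingEnd ℂ (acoef d m d) = 1 := by
    rw [acoef, map_div₀, Complex.conj_ofReal, ← add_div,
      show (2 * (d : ℝ) - d) / (4 * m) = d / (4 * m) by ring, omg_div_four_mul_add_conj hd,
      div_self (two_cos_pi_div_two_mul_ne_zero hm)]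
  rw [abar, hAd, hBd, ← add_smul, h, one_smul]

lemma abar_sq (hd : d ≠ 0) (hm : 2 ≤ m) (hAd : A ^ d = 1) (hBd : B ^ d = 1)
    (hrel1 : ∀ k, 1 ≤ k → k ≤ d - 1 → abar d m A B k * abar d m A B (d - k) = 1)
    (hrel2 : ∀ k, 1 ≤ k → k ≤ d - 1 → abar d m A B k = (abar d m A B 1) ^ k)
    {k : ℕ} (hk1 : 1 ≤ k) (hk : 2 * k ≤ d) : abar d m A B k ^ 2 = abar d m A B (2 * k) := by
  rcases hk.lt_or_eq with hlt | heq
  · rw [hrel2 (2 * k) (by omega) (by omega), hrel2 k hk1 (by omega), ← pow_mul, mul_comm]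
  · rw [heq, abar_self hd hm hAd hBd, ← hrel1 k hk1 (by omega), sq, show d - k = k by omega]

end Abar

theorem stmt4_general (d m N : ℕ) (hm : 2 ≤ m)
    (A B : Matrix (Fin N) (Fin N) ℂ)
    (hAd : A ^ d = 1) (hBd : B ^ d = 1)
    (hrel1 : ∀ k, 1 ≤ k → k ≤ d - 1 → abar d m A B k * abar d m A B (d - k) = 1)
    (hrel2 : ∀ k, 1 ≤ k → k ≤ d - 1 → abar d m A B k = (abar d m A B 1) ^ k) :
    ∀ k : ℕ, 1 ≤ k → k ≤ d / 2 →
      (A ^ k).trace = omg d (-((k : ℝ) / m)) * (B ^ k).trace := by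
  intro k hk1 hk2
  have hd : d ≠ 0 := by omega
  have hkd : k ≤ d := by omega
  have h₁ := trace_pow_mul_of_pencil_mul_eq_one hAd hBd hkd
    (a := acoef d m k) (b := starRingEnd ℂ (acoef d m k))
    (by rw [← abar_sub_eq hkd]; exact hrel1 k hk1 (by omega))
  have h₂ := trace_pow_mul_of_pencil_sq_eq hBd hkd
    (abar_sq hd hm hAd hBd hrel1 hrel2 hk1 (by omega))
  rw [acoef_two_mul hm, map_mul, map_mul, map_pow, Complex.conj_ofReal] at h₂
  rw [omg_neg_div_eq hm]
  exact eq_of_pencil_relations (by rw [conj_omg]; exact omg_mul_omg_neg d _)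
    (omg_div_four_mul_add_conj hd m) (omg_div_four_mul_sq_ne_one hd (by omega))
    (sq_mul_acoef_mul_conj hm k) h₁ h₂

/-- Tr(A^k) = ω^{−k/m} Tr(B^k) for k = 1,…,⌊d/2⌋. -/
theorem stmt4 (d m N : ℕ) (hd : 2 ≤ d) (hm : 2 ≤ m) (hN : 1 ≤ N)
    (A B : Matrix (Fin N) (Fin N) ℂ)
    (hA : A ∈ Matrix.unitaryGroup (Fin N) ℂ) (hB : B ∈ Matrix.unitaryGroup (Fin N) ℂ)
    (hAd : A ^ d = 1) (hBd : B ^ d = 1)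
    (hrel1 : ∀ k, 1 ≤ k → k ≤ d - 1 → abar d m A B k * abar d m A B (d - k) = 1)
    (hrel2 : ∀ k, 1 ≤ k → k ≤ d - 1 → abar d m A B k = (abar d m A B 1) ^ k) :
    ∀ k : ℕ, 1 ≤ k → k ≤ d / 2 →
      (A ^ k).trace = omg d (-((k : ℝ) / m)) * (B ^ k).trace :=
  stmt4_general d m N hm A B hAd hBd hrel1 hrel2
end

section
/- Under the stated relations, for every non-negative integer t and every x = 1,…,⌊d/2⌋ one has Tr(A^x) = ω^{2tx/m} Tr(A^{(2t+1)x} (B†)^{2tx}), where B† denotes the conjugate transpose (inverse) of B. -/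
open Matrix

/-! ### Auxiliary scalar machinery -/

/-- `kph d m j = exp(iπj/(2dm))`. -/
noncomputable def kph (d m : ℕ) (j : ℤ) : ℂ :=
  Complex.exp ((((j : ℝ) * Real.pi) / (2 * d * m) : ℝ) * Complex.I)

/-- `ccc m = 2 cos(π/(2m))` as a complex number. -/
noncomputable def ccc (m : ℕ) : ℂ := ((2 * Real.cos (Real.pi / (2 * m)) : ℝ) : ℂ)

lemma kph_mul (d m : ℕ) (a b : ℤ) : kph d m a * kph d m b = kph d m (a + b) := by
  unfold kph
  rw [← Complex.exp_add]
  congr 1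
  push_cast
  ring

lemma kph_zero (d m : ℕ) : kph d m 0 = 1 := by
  unfold kph
  norm_num

lemma kph_ne_zero (d m : ℕ) (j : ℤ) : kph d m j ≠ 0 := Complex.exp_ne_zero _

lemma kph_conj (d m : ℕ) (j : ℤ) : (starRingEnd ℂ) (kph d m j) = kph d m (-j) := by
  unfold kph
  rw [← Complex.exp_conj]
  congr 1
  simp only [_root_.map_mul, Complex.conj_I, Complex.conj_ofReal]
  push_cast
  ring

lemma kph_pow (d m : ℕ) (j : ℤ) (n : ℕ) : kph d m j ^ n = kph d m (j * n) := by
  induction n with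
  | zero => simpa using (kph_zero d m).symm
  | succ k ih =>
      rw [pow_succ, ih, kph_mul]
      congr 1
      push_cast
      ring

lemma ccc_conj (m : ℕ) : (starRingEnd ℂ) (ccc m) = ccc m := Complex.conj_ofReal _

lemma ccc_ne_zero (m : ℕ) (hm : 2 ≤ m) : ccc m ≠ 0 := by
  unfold ccc
  rw [Complex.ofReal_ne_zero]
  have hm' : (2:ℝ) ≤ m := by exact_mod_cast hm
  have h1 : 0 < Real.pi / (2*(m:ℝ)) := by positivity
  have h2 : Real.pi / (2*(m:ℝ)) < Real.pi / 2 :=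
    div_lt_div_of_pos_left Real.pi_pos (by norm_num) (by linarith)
  have := Real.cos_pos_of_mem_Ioo (Set.mem_Ioo.mpr ⟨by linarith [Real.pi_pos], h2⟩)
  positivity

lemma ccc_eq (d m : ℕ) (hd : (d:ℝ) ≠ 0) (hm : (m:ℝ) ≠ 0) :
    ccc m = kph d m d + kph d m (-(d:ℤ)) := by
  have k1 : kph d m d = Complex.exp ((Real.pi/(2*m) : ℝ) * Complex.I) := by
    unfold kph
    congr 2
    rw [Complex.ofReal_inj]
    push_cast
    field_simp
  have k2 : kph d m (-(d:ℤ)) = Complex.exp (-((Real.pi/(2*m) : ℝ) * Complex.I)) := by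
    unfold kph
    congr 1
    push_cast
    have hdc : (d:ℂ) ≠ 0 := by exact_mod_cast hd
    have hmc : (m:ℂ) ≠ 0 := by exact_mod_cast hm
    field_simp
  rw [k1, k2]
  unfold ccc
  push_cast [Complex.ofReal_cos]
  rw [Complex.cos]
  ring

lemma acoef_eq (d m : ℕ) (hd : (d:ℝ) ≠ 0) (hm : (m:ℝ) ≠ 0) (k : ℕ) :
    acoef d m k = kph d m (2*(k:ℤ) - d) / ccc m := by
  unfold acoef omg kph ccc
  congr 3
  rw [Complex.ofReal_inj]
  push_cast
  field_simp
  ring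

lemma acoef_conj (d m : ℕ) (hd : (d:ℝ) ≠ 0) (hm : (m:ℝ) ≠ 0) (k : ℕ) :
    (starRingEnd ℂ) (acoef d m k) = kph d m ((d:ℤ) - 2*k) / ccc m := by
  rw [acoef_eq d m hd hm, map_div₀, kph_conj, ccc_conj]
  congr 2
  ring

/-! ### The vanishing-of-traces engine -/

theorem traces_zero {N : ℕ} (d x : ℕ) (hd : 2 ≤ d) (hx1 : 1 ≤ x) (hxd : x < d)
    (ζ : ℂ) (hζ : ζ ≠ 0) (hζ1 : ζ ^ (2*d) ≠ 1)
    (A B : Matrix (Fin N) (Fin N) ℂ) (hAd : A ^ d = 1) (hBd : B ^ d = 1)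
    (hstar : ∀ n : ℕ, 2 ≤ n → n ≤ d →
      ζ^(2*n) • A ^ n + B ^ n
        = ζ^(2*n-2) • (A ^ (n-1) * B) + ζ^2 • (B ^ (n-1) * A)) :
    ∀ a b : ℕ, (a + b) % d = x % d → (A ^ a * B ^ b).trace = 0 := by
  -- abbreviations for the traces involved
  set T : ℂ := (A ^ x).trace with hT
  set Z1 : ℂ := (A ^ (x + d - 1) * B).trace with hZ1
  set D : ℂ := Z1 - ζ^2 * T with hD
  set W : ℂ := (B ^ x).trace with hW
  set Y1 : ℂ := (A * B ^ (x + d - 1)).trace with hY1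
  set E : ℂ := ζ^2 * Y1 - W with hE
  -- power bookkeeping
  have hmodA : ∀ u : ℕ, A ^ u = A ^ (u % d) := by
    intro u
    conv_lhs => rw [← Nat.div_add_mod u d]
    rw [pow_add, pow_mul, hAd, one_pow, one_mul]
  have hmodB : ∀ u : ℕ, B ^ u = B ^ (u % d) := by
    intro u
    conv_lhs => rw [← Nat.div_add_mod u d]
    rw [pow_add, pow_mul, hBd, one_pow, one_mul]
  -- Equation A: trace the star relation against A ^ (x + d - n)
  have eqA : ∀ n : ℕ, 2 ≤ n → n ≤ d →
      ζ^(2*n) * T + (A ^ (x+d-n) * B ^ n).trace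
        = ζ^(2*n-2) * Z1 + ζ^2 * (A ^ (x+d-(n-1)) * B ^ (n-1)).trace := by
    intro n h2 hnd
    have h := congrArg (fun M => (A ^ (x+d-n) * M).trace) (hstar n h2 hnd)
    simp only [mul_add, Matrix.mul_smul, Matrix.trace_add, Matrix.trace_smul,
      smul_eq_mul] at h
    have e1 : A ^ (x+d-n) * A ^ n = A ^ x * A ^ d := by
      rw [← pow_add, ← pow_add, show (x+d-n)+n = x+d from by omega]
    have e2 : A ^ (x+d-n) * (A ^ (n-1) * B) = A ^ (x+d-1) * B := by
      rw [← mul_assoc, ← pow_add, show (x+d-n)+(n-1) = x+d-1 from by omega]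
    have e3 : (A ^ (x+d-n) * (B ^ (n-1) * A)).trace
        = (A ^ (x+d-(n-1)) * B ^ (n-1)).trace := by
      rw [← mul_assoc, Matrix.trace_mul_comm, ← mul_assoc, ← pow_succ',
        show x+d-n+1 = x+d-(n-1) from by omega]
    rw [e1, e2, e3, hAd, mul_one] at h
    exact h
  -- Equation B: trace the star relation against B ^ (x + d - n)
  have eqB : ∀ n : ℕ, 2 ≤ n → n ≤ d →
      ζ^(2*n) * (A ^ n * B ^ (x+d-n)).trace + W
        = ζ^(2*n-2) * (A ^ (n-1) * B ^ (x+d-(n-1))).trace + ζ^2 * Y1 := by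
    intro n h2 hnd
    have h := congrArg (fun M => (B ^ (x+d-n) * M).trace) (hstar n h2 hnd)
    simp only [mul_add, Matrix.mul_smul, Matrix.trace_add, Matrix.trace_smul,
      smul_eq_mul] at h
    have e1 : (B ^ (x+d-n) * A ^ n).trace = (A ^ n * B ^ (x+d-n)).trace :=
      Matrix.trace_mul_comm _ _
    have e2 : B ^ (x+d-n) * B ^ n = B ^ x * B ^ d := by
      rw [← pow_add, ← pow_add, show (x+d-n)+n = x+d from by omega]
    have e3 : (B ^ (x+d-n) * (A ^ (n-1) * B)).trace
        = (A ^ (n-1) * B ^ (x+d-(n-1))).trace := by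
      rw [Matrix.trace_mul_comm, mul_assoc, ← pow_succ',
        show x+d-n+1 = x+d-(n-1) from by omega]
    have e4 : (B ^ (x+d-n) * (B ^ (n-1) * A)).trace = (A * B ^ (x+d-1)).trace := by
      rw [← mul_assoc, ← pow_add, Matrix.trace_mul_comm,
        show (x+d-n)+(n-1) = x+d-1 from by omega]
    rw [e1, e2, e3, e4, hBd, mul_one] at h
    exact h
  -- closed form along the A-chain
  have formA : ∀ j : ℕ, 1 ≤ j → j ≤ d →
      (A ^ (x+d-j) * B ^ j).trace = ζ^(2*j) * T + (j:ℂ) * ζ^(2*j-2) * D := by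
    intro j hj
    induction j, hj using Nat.le_induction with
    | base =>
        intro _
        rw [pow_one, ← hZ1, hD]
        norm_num
    | succ j hj ih =>
        intro hjd
        have hZj := ih (by omega)
        have hEq := eqA (j+1) (by omega) hjd
        obtain ⟨k, rfl⟩ : ∃ k, j = k + 1 := ⟨j - 1, by omega⟩
        simp only [show 2*(k+1+1) = 2*k+4 from by omega, show 2*k+4-2 = 2*k+2 from by omega,
          show 2*(k+1+1)-2 = 2*k+2 from by omega, show (k+1+1)-1 = k+1 from by omega,
          show 2*(k+1) = 2*k+2 from by omega, show 2*(k+1)-2 = 2*k from by omega]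
          at hEq hZj ⊢
        push_cast
        push_cast at hZj
        linear_combination hEq + ζ^2 * hZj - ζ^(2*k+2) * hD
  -- closed form along the B-chain
  have formB : ∀ j : ℕ, 1 ≤ j → j ≤ d →
      ζ^(2*j) * (A ^ j * B ^ (x+d-j)).trace = W + (j:ℂ) * E := by
    intro j hj
    induction j, hj using Nat.le_induction with
    | base =>
        intro _
        rw [pow_one, ← hY1, hE]
        norm_num
    | succ j hj ih =>
        intro hjd
        have hYj := ih (by omega)
        have hEq := eqB (j+1) (by omega) hjd
        obtain ⟨k, rfl⟩ : ∃ k, j = k + 1 := ⟨j - 1, by omega⟩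
        simp only [show 2*(k+1+1) = 2*k+4 from by omega, show 2*k+4-2 = 2*k+2 from by omega,
          show 2*(k+1+1)-2 = 2*k+2 from by omega, show (k+1+1)-1 = k+1 from by omega,
          show 2*(k+1) = 2*k+2 from by omega, show 2*(k+1)-2 = 2*k from by omega]
          at hEq hYj ⊢
        push_cast
        push_cast at hYj
        linear_combination hEq + hYj
  -- wrap-around identity e1 : T = ζ^{2d} T + d ζ^{2d-2} D
  have wrapA : T = ζ^(2*d) * T + (d:ℂ) * ζ^(2*d-2) * D := by
    have h := formA d (by omega) le_rfl
    rw [show x+d-d = x from by omega, hBd, mul_one] at h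
    exact h
  -- link equations
  have hyx : ζ^(2*x) * T = W + (x:ℂ) * E := by
    have h := formB x hx1 (by omega)
    rw [show x+d-x = d from by omega, hBd, mul_one, ← hT] at h
    exact h
  have hyx1 := formB (x+1) (by omega) (by omega)
  have hzd1 := formA (d-1) (by omega) (by omega)
  have hWzx : W = ζ^(2*x) * T + (x:ℂ) * ζ^(2*x-2) * D := by
    have h := formA x hx1 (by omega)
    rw [show x+d-x = d from by omega, hAd, one_mul, ← hW] at h
    exact h
  -- eliminate subtractions
  obtain ⟨w, rfl⟩ : ∃ w, x = w + 1 := ⟨x - 1, by omega⟩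
  obtain ⟨e, rfl⟩ : ∃ e, d = e + 2 := ⟨d - 2, by omega⟩
  simp only [show 2*(e+2)-2 = 2*e+2 from by omega, show (e+2)-1 = e+1 from by omega,
    show 2*(e+1)-2 = 2*e from by omega, show 2*(w+1)-2 = 2*w from by omega,
    show 2*(e+2) = 2*e+4 from by omega, show 2*(e+1) = 2*e+2 from by omega,
    show 2*(w+1) = 2*w+2 from by omega, show 2*(w+1+1) = 2*w+4 from by omega,
    show (w+1)+(e+2)-((w+1)+1) = e+1 from by omega,
    show (w+1)+(e+2)-((e+2)-1) = w+2 from by omega,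
    show (w+1)+(e+2)-(e+1) = w+2 from by omega,
    show w+1+1 = w+2 from by omega]
    at wrapA hyx hyx1 hzd1 hWzx
  push_cast at wrapA hyx hyx1 hzd1 hWzx
  -- solve the linear system
  have hxC : ((w:ℂ)+1) ≠ 0 := by
    have : ((w:ℂ)+1) = ((w+1 : ℕ) : ℂ) := by push_cast; ring
    rw [this]
    exact Nat.cast_ne_zero.mpr (by omega)
  have hE0 : E = -(ζ^(2*w) * D) := by
    have h2 : ((w:ℂ)+1) * (E + ζ^(2*w) * D) = 0 := by
      linear_combination - hyx - hWzx
    rcases mul_eq_zero.mp h2 with h | h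
    · exact absurd h hxC
    · linear_combination h
  have hD0 : D = 0 := by
    have key : (ζ^(2*w) * (1 - ζ^(2*(e+2)))) * D = 0 := by
      have hz1 : ζ^(2*(e+2)) = ζ^(2*e+4) := by ring
      rw [hz1]
      linear_combination hE0 + hyx1 - hyx - ζ^(2*w+4)*hzd1 + ζ^(2*w+2)*wrapA
    rcases mul_eq_zero.mp key with h | h
    · exact absurd h (mul_ne_zero (pow_ne_zero _ hζ) (sub_ne_zero.mpr (Ne.symm hζ1)))
    · exact h
  have hT0 : T = 0 := by
    have h6 : (1 - ζ^(2*(e+2))) * T = 0 := by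
      have hz1 : ζ^(2*(e+2)) = ζ^(2*e+4) := by ring
      rw [hz1]
      linear_combination wrapA + ((e:ℂ)+2)*ζ^(2*e+2)*hD0
    rcases mul_eq_zero.mp h6 with h | h
    · exact absurd h (sub_ne_zero.mpr (Ne.symm hζ1))
    · exact h
  -- conclusion
  intro a b hab
  have hd2 : 0 < e + 2 := by omega
  have hbmod : b % (e+2) < e + 2 := Nat.mod_lt _ hd2
  have hmod : a % (e+2) = ((w+1)+(e+2) - b % (e+2)) % (e+2) := by
    have hbs : b % (e+2) ≡ b [MOD (e+2)] := Nat.mod_modEq b (e+2)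
    have h2 : ((w+1)+(e+2) - b % (e+2)) + b ≡ a + b [MOD (e+2)] := by
      calc ((w+1)+(e+2) - b % (e+2)) + b
          ≡ ((w+1)+(e+2) - b % (e+2)) + b % (e+2) [MOD (e+2)] :=
            Nat.ModEq.add_left _ hbs.symm
        _ = (w+1)+(e+2) := by omega
        _ ≡ a + b [MOD (e+2)] := Nat.add_modEq_right.trans (Nat.ModEq.symm hab)
    exact (Nat.ModEq.add_right_cancel' b h2).symm
  have hAa : A ^ a = A ^ ((w+1)+(e+2) - b % (e+2)) := by
    rw [hmodA a, hmodA ((w+1)+(e+2) - b % (e+2)), hmod]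
  rw [hAa, hmodB b]
  rcases Nat.eq_zero_or_pos (b % (e+2)) with h0 | hpos
  · rw [h0, pow_zero, mul_one, Nat.sub_zero, pow_add, hAd, mul_one]
    exact hT0
  · have h := formA (b % (e+2)) hpos (by omega)
    rw [hT0, hD0] at h
    rw [show (w+1)+(e+2) - b % (e+2) = w+1+(e+2) - b % (e+2) from rfl]
    rw [h]
    ring

lemma kph_fourd_ne_one (d m : ℕ) (hd : 1 ≤ d) (hm : 2 ≤ m) : kph d m (4*(d:ℤ)) ≠ 1 := by
  unfold kph
  intro h
  rw [Complex.exp_eq_one_iff] at h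
  obtain ⟨n, hn⟩ := h
  rw [show ((n:ℂ) * (2 * (Real.pi:ℂ) * Complex.I))
      = ((((n:ℝ) * (2*Real.pi)) : ℝ) : ℂ) * Complex.I from by push_cast; ring] at hn
  have h2 := mul_right_cancel₀ Complex.I_ne_zero hn
  have h3 : ((((4*(d:ℤ)):ℤ)):ℝ) * Real.pi / (2*(d:ℝ)*(m:ℝ)) = (n:ℝ) * (2*Real.pi) := by
    exact_mod_cast h2
  have hdR : (0:ℝ) < d := by
    have : (1:ℝ) ≤ d := by exact_mod_cast hd
    linarith
  have hmR : (2:ℝ) ≤ m := by exact_mod_cast hm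
  have hπ := Real.pi_pos
  have hL : ((((4*(d:ℤ)):ℤ)):ℝ) * Real.pi / (2*(d:ℝ)*(m:ℝ)) = 2*Real.pi/(m:ℝ) := by
    push_cast
    field_simp
    ring
  rw [hL] at h3
  have hub : 2*Real.pi/(m:ℝ) ≤ Real.pi := by
    rw [div_le_iff₀ (by linarith : (0:ℝ) < m)]
    nlinarith
  rcases lt_or_ge 0 n with hn' | hn'
  · have h5 : (1:ℝ) ≤ (n:ℝ) := by exact_mod_cast hn'
    have h6 : 2*Real.pi ≤ (n:ℝ)*(2*Real.pi) := by nlinarith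
    linarith
  · have h5 : ((n:ℝ)) ≤ 0 := by exact_mod_cast hn'
    have h6 : (n:ℝ)*(2*Real.pi) ≤ 0 := by nlinarith
    have hpos : 0 < 2*Real.pi/(m:ℝ) := by positivity
    linarith

/-- Tr(A^x) = ω^{2tx/m} Tr(A^{(2t+1)x} (B†)^{2tx}) for all t ≥ 0
and x = 1,…,⌊d/2⌋. -/
theorem stmt5 (d m N : ℕ) (hd : 2 ≤ d) (hm : 2 ≤ m) (hN : 1 ≤ N)
    (A B : Matrix (Fin N) (Fin N) ℂ)
    (hA : A ∈ Matrix.unitaryGroup (Fin N) ℂ) (hB : B ∈ Matrix.unitaryGroup (Fin N) ℂ)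
    (hAd : A ^ d = 1) (hBd : B ^ d = 1)
    (hrel1 : ∀ k, 1 ≤ k → k ≤ d - 1 → abar d m A B k * abar d m A B (d - k) = 1)
    (hrel2 : ∀ k, 1 ≤ k → k ≤ d - 1 → abar d m A B k = (abar d m A B 1) ^ k) :
    ∀ t x : ℕ, 1 ≤ x → x ≤ d / 2 →
      (A ^ x).trace =
        omg d (2 * (t : ℝ) * x / m) * (A ^ ((2 * t + 1) * x) * (Bᴴ) ^ (2 * t * x)).trace := by
  intro t x hx1 hx2
  have hdR : (d:ℝ) ≠ 0 := Nat.cast_ne_zero.mpr (by omega)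
  have hmR : (m:ℝ) ≠ 0 := Nat.cast_ne_zero.mpr (by omega)
  have hcc := ccc_ne_zero m hm
  set ζ : ℂ := kph d m 2 with hζdef
  have hζ : ζ ≠ 0 := kph_ne_zero d m 2
  have zp : ∀ k : ℕ, ζ^k = kph d m (2*(k:ℤ)) := by
    intro k
    rw [hζdef, kph_pow]
  have hζ1 : ζ^(2*d) ≠ 1 := by
    rw [zp, show (2*((2*d:ℕ):ℤ)) = 4*d from by push_cast; ring]
    exact kph_fourd_ne_one d m (by omega) hm
  have kmul : ∀ a b : ℤ, kph d m a * kph d m b = kph d m (a+b) := kph_mul d m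
  have hccP : ∀ r : ℤ, kph d m r * ccc m = kph d m (r + d) + kph d m (r - d) := by
    intro r
    rw [ccc_eq d m hdR hmR, mul_add, kmul, kmul,
      show (r + -(d:ℤ)) = r - d from by ring]
  -- expansion of products of abar's
  have expand : ∀ j : ℕ, abar d m A B j * abar d m A B 1 =
      (acoef d m j * acoef d m 1) • A^(j+1)
      + (acoef d m j * (starRingEnd ℂ) (acoef d m 1)) • (A^j * B)
      + ((starRingEnd ℂ) (acoef d m j) * acoef d m 1) • (B^j * A)
      + ((starRingEnd ℂ) (acoef d m j) * (starRingEnd ℂ) (acoef d m 1)) • B^(j+1) := by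
    intro j
    show (acoef d m j • A ^ j + (starRingEnd ℂ) (acoef d m j) • B ^ j)
        * (acoef d m 1 • A ^ 1 + (starRingEnd ℂ) (acoef d m 1) • B ^ 1) = _
    rw [add_mul, mul_add, mul_add]
    simp only [smul_mul_assoc, mul_smul_comm, smul_smul, pow_one]
    rw [← pow_succ A j, ← pow_succ B j]
    module
  -- the star relations
  have hstar : ∀ n : ℕ, 2 ≤ n → n ≤ d →
      ζ^(2*n) • A ^ n + B ^ n
        = ζ^(2*n-2) • (A ^ (n-1) * B) + ζ^2 • (B ^ (n-1) * A) := by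
    intro n h2 hnd
    have hn1 : (1:ℕ) ≤ n := by omega
    -- scalar facts, with the multiplier γ = ccc² · kph(2n)
    have s3 : ccc m ^ 2 * kph d m (2*(n:ℤ))
        * (acoef d m (n-1) * (starRingEnd ℂ) (acoef d m 1)) = ζ^(2*n-2) := by
      rw [acoef_eq d m hdR hmR (n-1), acoef_conj d m hdR hmR 1, zp, div_mul_div_comm, kmul,
        show (2*((n-1:ℕ):ℤ) - d) + ((d:ℤ) - 2*((1:ℕ):ℤ)) = 2*(n:ℤ) - 4 from by omega]
      have hq : kph d m (2*(n:ℤ)) * kph d m (2*(n:ℤ) - 4) = kph d m (2*((2*n-2:ℕ):ℤ)) := by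
        rw [kmul]; congr 1; omega
      have e : ccc m ^ 2 * kph d m (2*(n:ℤ))
          * (kph d m (2*(n:ℤ) - 4) / (ccc m * ccc m))
          = kph d m (2*(n:ℤ)) * kph d m (2*(n:ℤ) - 4) := by
        field_simp
      rw [e, hq]
    have s4 : ccc m ^ 2 * kph d m (2*(n:ℤ))
        * ((starRingEnd ℂ) (acoef d m (n-1)) * acoef d m 1) = ζ^2 := by
      rw [acoef_conj d m hdR hmR (n-1), acoef_eq d m hdR hmR 1, zp, div_mul_div_comm, kmul,
        show ((d:ℤ) - 2*((n-1:ℕ):ℤ)) + (2*((1:ℕ):ℤ) - (d:ℤ)) = 4 - 2*(n:ℤ) from by omega]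
      have hq : kph d m (2*(n:ℤ)) * kph d m (4 - 2*(n:ℤ)) = kph d m (2*((2:ℕ):ℤ)) := by
        rw [kmul]; congr 1; omega
      have e : ccc m ^ 2 * kph d m (2*(n:ℤ))
          * (kph d m (4 - 2*(n:ℤ)) / (ccc m * ccc m))
          = kph d m (2*(n:ℤ)) * kph d m (4 - 2*(n:ℤ)) := by
        field_simp
      rw [e, hq]
    have s1 : ccc m ^ 2 * kph d m (2*(n:ℤ))
        * (acoef d m n - acoef d m (n-1) * acoef d m 1) = ζ^(2*n) := by
      rw [acoef_eq d m hdR hmR n, acoef_eq d m hdR hmR (n-1), acoef_eq d m hdR hmR 1, zp,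
        div_mul_div_comm, kmul,
        show (2*((n-1:ℕ):ℤ) - d) + (2*((1:ℕ):ℤ) - d) = 2*(n:ℤ) - 2*d from by omega]
      have hP := hccP (2*(n:ℤ) - d)
      rw [show (2*(n:ℤ) - d) + d = 2*(n:ℤ) from by ring,
        show (2*(n:ℤ) - d) - d = 2*(n:ℤ) - 2*d from by ring] at hP
      have hq : kph d m (2*(n:ℤ)) * kph d m (2*(n:ℤ)) = kph d m (2*((2*n:ℕ):ℤ)) := by
        rw [kmul]; congr 1; omega
      have e : ccc m ^ 2 * kph d m (2*(n:ℤ))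
          * (kph d m (2*(n:ℤ) - (d:ℤ)) / ccc m - kph d m (2*(n:ℤ) - 2*(d:ℤ)) / (ccc m * ccc m))
          = kph d m (2*(n:ℤ)) * (kph d m (2*(n:ℤ) - (d:ℤ)) * ccc m)
            - kph d m (2*(n:ℤ)) * kph d m (2*(n:ℤ) - 2*(d:ℤ)) := by
        field_simp
      rw [e, hP]
      linear_combination hq
    have s2 : ccc m ^ 2 * kph d m (2*(n:ℤ))
        * ((starRingEnd ℂ) (acoef d m n)
          - (starRingEnd ℂ) (acoef d m (n-1)) * (starRingEnd ℂ) (acoef d m 1)) = 1 := by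
      rw [acoef_conj d m hdR hmR n, acoef_conj d m hdR hmR (n-1), acoef_conj d m hdR hmR 1,
        div_mul_div_comm, kmul,
        show ((d:ℤ) - 2*((n-1:ℕ):ℤ)) + ((d:ℤ) - 2*((1:ℕ):ℤ)) = 2*(d:ℤ) - 2*(n:ℤ) from by omega]
      have hP := hccP ((d:ℤ) - 2*(n:ℤ))
      rw [show ((d:ℤ) - 2*(n:ℤ)) + d = 2*(d:ℤ) - 2*(n:ℤ) from by ring,
        show ((d:ℤ) - 2*(n:ℤ)) - d = -(2*(n:ℤ)) from by ring] at hP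
      have hq : kph d m (2*(n:ℤ)) * kph d m (-(2*(n:ℤ))) = 1 := by
        rw [kmul, show (2*(n:ℤ)) + -(2*(n:ℤ)) = 0 from by ring, kph_zero]
      have e : ccc m ^ 2 * kph d m (2*(n:ℤ))
          * (kph d m ((d:ℤ) - 2*(n:ℤ)) / ccc m - kph d m (2*(d:ℤ) - 2*(n:ℤ)) / (ccc m * ccc m))
          = kph d m (2*(n:ℤ)) * (kph d m ((d:ℤ) - 2*(n:ℤ)) * ccc m)
            - kph d m (2*(n:ℤ)) * kph d m (2*(d:ℤ) - 2*(n:ℤ)) := by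
        field_simp
      rw [e, hP]
      linear_combination hq
    rcases eq_or_lt_of_le hnd with hcase | hcase
    · -- n = d : use hrel1
      subst hcase
      have h1 : abar n m A B (n-1) * abar n m A B 1 = 1 := by
        have := hrel1 (n-1) (by omega) (by omega)
        rwa [show n - (n-1) = 1 from by omega] at this
      rw [expand (n-1), show n-1+1 = n from by omega, hAd, hBd] at h1
      -- scalar facts for the constant terms
      have sc1 : ccc m ^ 2 * kph n m (2*(n:ℤ)) * (acoef n m (n-1) * acoef n m 1)
          = kph n m (2*(n:ℤ)) := by
        rw [acoef_eq n m hdR hmR (n-1), acoef_eq n m hdR hmR 1, div_mul_div_comm, kmul,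
          show (2*((n-1:ℕ):ℤ) - n) + (2*((1:ℕ):ℤ) - n) = 0 from by omega, kph_zero]
        field_simp
      have sc2 : ccc m ^ 2 * kph n m (2*(n:ℤ))
          * ((starRingEnd ℂ) (acoef n m (n-1)) * (starRingEnd ℂ) (acoef n m 1))
          = kph n m (2*(n:ℤ)) := by
        rw [acoef_conj n m hdR hmR (n-1), acoef_conj n m hdR hmR 1, div_mul_div_comm, kmul,
          show ((n:ℤ) - 2*((n-1:ℕ):ℤ)) + ((n:ℤ) - 2*((1:ℕ):ℤ)) = 0 from by omega, kph_zero]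
        field_simp
      have sc4 : ccc m ^ 2 * kph n m (2*(n:ℤ))
          = ζ^(2*n) + 1 + 2 * kph n m (2*(n:ℤ)) := by
        have hc2 : ccc m ^ 2 = kph n m (2*(n:ℤ)) + 2 + kph n m (-(2*(n:ℤ))) := by
          rw [sq, ccc_eq n m hdR hmR]
          have k1 : kph n m (n:ℤ) * kph n m (n:ℤ) = kph n m (2*(n:ℤ)) := by
            rw [kmul]; congr 1; ring
          have k2 : kph n m (n:ℤ) * kph n m (-(n:ℤ)) = 1 := by
            rw [kmul, show ((n:ℤ) + -(n:ℤ)) = 0 from by ring, kph_zero]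
          have k3 : kph n m (-(n:ℤ)) * kph n m (-(n:ℤ)) = kph n m (-(2*(n:ℤ))) := by
            rw [kmul]; congr 1; ring
          linear_combination k1 + k3 + 2*k2
        rw [hc2, zp]
        have k4 : kph n m (-(2*(n:ℤ))) * kph n m (2*(n:ℤ)) = 1 := by
          rw [kmul, show (-(2*(n:ℤ)) + 2*(n:ℤ)) = 0 from by ring, kph_zero]
        have k5 : kph n m (2*(n:ℤ)) * kph n m (2*(n:ℤ)) = kph n m (2*((2*n:ℕ):ℤ)) := by
          rw [kmul]; congr 1; omega
        linear_combination k4 + k5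
      -- rearrange h1 and conclude
      have hsub2 : (acoef n m (n-1) * (starRingEnd ℂ) (acoef n m 1)) • (A^(n-1) * B)
          + ((starRingEnd ℂ) (acoef n m (n-1)) * acoef n m 1) • (B^(n-1) * A)
          = (1 : Matrix (Fin N) (Fin N) ℂ)
            - (acoef n m (n-1) * acoef n m 1) • (1 : Matrix (Fin N) (Fin N) ℂ)
            - ((starRingEnd ℂ) (acoef n m (n-1)) * (starRingEnd ℂ) (acoef n m 1))
              • (1 : Matrix (Fin N) (Fin N) ℂ) := by
        have hmod : (acoef n m (n-1) * (starRingEnd ℂ) (acoef n m 1)) • (A^(n-1) * B)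
            + ((starRingEnd ℂ) (acoef n m (n-1)) * acoef n m 1) • (B^(n-1) * A)
            - ((1 : Matrix (Fin N) (Fin N) ℂ)
              - (acoef n m (n-1) * acoef n m 1) • (1 : Matrix (Fin N) (Fin N) ℂ)
              - ((starRingEnd ℂ) (acoef n m (n-1)) * (starRingEnd ℂ) (acoef n m 1))
                • (1 : Matrix (Fin N) (Fin N) ℂ))
            = ((acoef n m (n-1) * acoef n m 1) • (1 : Matrix (Fin N) (Fin N) ℂ)
              + (acoef n m (n-1) * (starRingEnd ℂ) (acoef n m 1)) • (A^(n-1) * B)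
              + ((starRingEnd ℂ) (acoef n m (n-1)) * acoef n m 1) • (B^(n-1) * A)
              + ((starRingEnd ℂ) (acoef n m (n-1)) * (starRingEnd ℂ) (acoef n m 1))
                • (1 : Matrix (Fin N) (Fin N) ℂ)) - 1 := by
          module
        rw [← sub_eq_zero, hmod, h1, sub_self]
      have H := congrArg (fun M : Matrix (Fin N) (Fin N) ℂ
        => (ccc m ^ 2 * kph n m (2*(n:ℤ))) • M) hsub2
      simp only [smul_add, smul_sub, smul_smul] at H
      rw [s3, s4, sc1, sc2] at H
      rw [hAd, hBd, H, sc4]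
      module
    · -- n < d : use hrel2
      have h1 : abar d m A B n = abar d m A B (n-1) * abar d m A B 1 := by
        rw [hrel2 n (by omega) (by omega), hrel2 (n-1) (by omega) (by omega),
          ← pow_succ, show n-1+1 = n from by omega]
      rw [expand (n-1), show n-1+1 = n from by omega] at h1
      rw [show abar d m A B n
          = acoef d m n • A ^ n + (starRingEnd ℂ) (acoef d m n) • B ^ n from rfl] at h1
      have hsub2 : (acoef d m n - acoef d m (n-1) * acoef d m 1) • A^n
          + ((starRingEnd ℂ) (acoef d m n)
            - (starRingEnd ℂ) (acoef d m (n-1)) * (starRingEnd ℂ) (acoef d m 1)) • B^n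
          = (acoef d m (n-1) * (starRingEnd ℂ) (acoef d m 1)) • (A^(n-1) * B)
            + ((starRingEnd ℂ) (acoef d m (n-1)) * acoef d m 1) • (B^(n-1) * A) := by
        have hmod : (acoef d m n - acoef d m (n-1) * acoef d m 1) • A^n
            + ((starRingEnd ℂ) (acoef d m n)
              - (starRingEnd ℂ) (acoef d m (n-1)) * (starRingEnd ℂ) (acoef d m 1)) • B^n
            - ((acoef d m (n-1) * (starRingEnd ℂ) (acoef d m 1)) • (A^(n-1) * B)
              + ((starRingEnd ℂ) (acoef d m (n-1)) * acoef d m 1) • (B^(n-1) * A))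
            = (acoef d m n • A ^ n + (starRingEnd ℂ) (acoef d m n) • B ^ n)
              - ((acoef d m (n-1) * acoef d m 1) • A^n
                + (acoef d m (n-1) * (starRingEnd ℂ) (acoef d m 1)) • (A^(n-1) * B)
                + ((starRingEnd ℂ) (acoef d m (n-1)) * acoef d m 1) • (B^(n-1) * A)
                + ((starRingEnd ℂ) (acoef d m (n-1)) * (starRingEnd ℂ) (acoef d m 1)) • B^n) := by
          module
        rw [← sub_eq_zero, hmod, h1, sub_self]
      have H := congrArg (fun M : Matrix (Fin N) (Fin N) ℂ
        => (ccc m ^ 2 * kph d m (2*(n:ℤ))) • M) hsub2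
      simp only [smul_add, smul_smul] at H
      rw [s1, s2, s3, s4, one_smul] at H
      exact H
  -- apply the trace-vanishing engine
  have hxd : x < d := lt_of_le_of_lt hx2 (Nat.div_lt_self (by omega) (by norm_num))
  have key := traces_zero d x hd hx1 hxd ζ hζ hζ1 A B hAd hBd hstar
  have hL : (A ^ x).trace = 0 := by
    have h := key x 0 (by simp)
    simpa using h
  have hBu : B * Bᴴ = 1 := by
    have h := (Matrix.mem_unitaryGroup_iff).mp hB
    rwa [Matrix.star_eq_conjTranspose] at h
  have hBH : Bᴴ = B ^ (d-1) := by
    calc Bᴴ = (B^(d-1) * B) * Bᴴ := by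
          rw [← pow_succ, show d-1+1 = d from by omega, hBd, one_mul]
      _ = B^(d-1) * (B * Bᴴ) := by rw [mul_assoc]
      _ = B^(d-1) := by rw [hBu, mul_one]
  have hR : (A ^ ((2*t+1)*x) * (Bᴴ) ^ (2*t*x)).trace = 0 := by
    rw [hBH, ← pow_mul]
    apply key
    obtain ⟨e, rfl⟩ : ∃ e, d = e + 2 := ⟨d-2, by omega⟩
    rw [show (2*t+1)*x + (e+2-1)*(2*t*x) = x + (2*t*x)*(e+2) from by
      rw [show e+2-1 = e+1 from rfl]; ring]
    exact Nat.add_mul_mod_self_right _ _ _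
  rw [hL, hR, mul_zero]
end

section
/- Under the stated relations, for every k = 1,…,d one has B^k = −(k−1) ω^{k/m} A^k + ω^{(k−1)/m} Σ_{t=0}^{k−1} A^t B A^{k−1−t}. -/
open Matrix

lemma omg_ne (d : ℕ) (t : ℝ) : omg d t ≠ 0 := Complex.exp_ne_zero _

lemma omg_inv (d : ℕ) (t : ℝ) : omg d (-t) = (omg d t)⁻¹ := by
  unfold omg; rw [← Complex.exp_neg]; congr 1; push_cast; ring

lemma omg_zpow (d : ℕ) (j : ℤ) (t : ℝ) : omg d ((j:ℝ) * t) = omg d t ^ j := by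
  unfold omg; rw [← Complex.exp_int_mul]; congr 1; push_cast; ring

lemma omg_div4 (d m : ℕ) (j : ℤ) : omg d ((j:ℝ)/(4*(m:ℝ))) = omg d (1/(4*(m:ℝ))) ^ j := by
  rw [← omg_zpow]
  congr 1
  ring

lemma scalar_key (P q H c : ℂ) (hP : P ≠ 0) (hq : q ≠ 0) (hH : H ≠ 0) (hc : c ≠ 0)
    (hch2 : c * H = H * H + 1) (x y z w x' w' δ : ℂ)
    (hx : x = P/c) (hy : y = P⁻¹/c) (hz : z = q*H⁻¹/c) (hw : w = H*q⁻¹/c)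
    (hx' : x' = P*q/c) (hw' : w' = (P*q)⁻¹/c) (hδ : δ = w' - y*w) :
    δ * (P*q*H*c*c) = 1 ∧ δ⁻¹ * (x*z - x') = -((P*q*H)*(P*q*H)) ∧
      δ⁻¹ * (x*w) = (P*H)*(P*H) ∧ δ⁻¹ * (y*z) = q*q := by
  subst hx hy hz hw hx' hw' hδ
  have h1 : ((P*q)⁻¹/c - (P⁻¹/c)*(H*q⁻¹/c)) * (P*q*H*c*c) = 1 := by
    field_simp
    linear_combination hch2
  have hinv : ((P*q)⁻¹/c - (P⁻¹/c)*(H*q⁻¹/c))⁻¹ = P*q*H*c*c :=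
    inv_eq_of_mul_eq_one_right h1
  refine ⟨h1, ?_, ?_, ?_⟩ <;> rw [hinv]
  · field_simp
    linear_combination (-1:ℂ) * hch2
  · field_simp
  · field_simp

/-- B^k = −(k−1) ω^{k/m} A^k + ω^{(k−1)/m} Σ_{t=0}^{k−1} A^t B A^{k−1−t}
for every k = 1,…,d. -/
theorem stmt6 (d m N : ℕ) (hd : 2 ≤ d) (hm : 2 ≤ m) (hN : 1 ≤ N)
    (A B : Matrix (Fin N) (Fin N) ℂ)
    (hA : A ∈ Matrix.unitaryGroup (Fin N) ℂ) (hB : B ∈ Matrix.unitaryGroup (Fin N) ℂ)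
    (hAd : A ^ d = 1) (hBd : B ^ d = 1)
    (hrel1 : ∀ k, 1 ≤ k → k ≤ d - 1 → abar d m A B k * abar d m A B (d - k) = 1)
    (hrel2 : ∀ k, 1 ≤ k → k ≤ d - 1 → abar d m A B k = (abar d m A B 1) ^ k) :
    ∀ k : ℕ, 1 ≤ k → k ≤ d →
      B ^ k = (-(((k : ℂ) - 1)) * omg d ((k : ℝ) / m)) • A ^ k +
        omg d (((k : ℝ) - 1) / m) • ∑ t ∈ Finset.range k, A ^ t * B * A ^ (k - 1 - t) := by
  have hm0 : (m:ℝ) ≠ 0 := Nat.cast_ne_zero.mpr (by omega)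
  have hd0 : (d:ℝ) ≠ 0 := Nat.cast_ne_zero.mpr (by omega)
  set c : ℂ := ((2 * Real.cos (Real.pi / (2 * (m:ℝ))) : ℝ) : ℂ) with hc_def
  set u : ℂ := omg d (1/(4*(m:ℝ))) with hu_def
  have hu : u ≠ 0 := by rw [hu_def]; exact omg_ne _ _
  have hc : c ≠ 0 := by
    rw [hc_def]
    have h1 : (0:ℝ) < Real.cos (Real.pi / (2 * (m:ℝ))) := by
      apply Real.cos_pos_of_mem_Ioo
      constructor
      · have h2 : (0:ℝ) < Real.pi / (2*(m:ℝ)) := by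
          have : (0:ℝ) < (m:ℝ) := lt_of_le_of_ne (Nat.cast_nonneg m) (Ne.symm hm0)
          positivity
        linarith [Real.pi_pos]
      · apply div_lt_div_of_pos_left Real.pi_pos (by norm_num)
        have : (2:ℝ) ≤ (m:ℝ) := by exact_mod_cast hm
        linarith
    simp only [ne_eq, Complex.ofReal_eq_zero]
    positivity
  have hacoef : ∀ j : ℕ, acoef d m j = u ^ (2*(j:ℤ)-(d:ℤ)) / c := by
    intro j
    unfold acoef
    rw [← hc_def]
    rw [show (2*(j:ℝ)-(d:ℝ))/(4*(m:ℝ)) = (((2*(j:ℤ)-(d:ℤ)):ℤ):ℝ)/(4*(m:ℝ)) from by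
      push_cast; ring]
    rw [omg_div4, ← hu_def]
  have hcu : (starRingEnd ℂ) u = u⁻¹ := by rw [hu_def, omg_conj, omg_inv]
  have hcc : (starRingEnd ℂ) c = c := by rw [hc_def]; exact Complex.conj_ofReal _
  have hconj : ∀ j : ℕ, (starRingEnd ℂ) (acoef d m j) = (u ^ (2*(j:ℤ)-(d:ℤ)))⁻¹ / c := by
    intro j
    rw [hacoef, map_div₀, hcc, map_zpow₀, hcu, _root_.inv_zpow]
  have hch : c = u^(d:ℤ) + (u^(d:ℤ))⁻¹ := by
    have h1 : u ^ (d:ℤ) = Complex.exp ((Real.pi/(2*(m:ℝ)) : ℝ) * Complex.I) := by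
      rw [hu_def, ← omg_div4]
      unfold omg
      rw [show (2*Real.pi*((((d:ℤ)):ℝ)/(4*(m:ℝ)))/(d:ℝ)) = Real.pi/(2*(m:ℝ)) from by
        push_cast; field_simp; ring]
    rw [h1, ← Complex.exp_neg, hc_def]
    push_cast [Complex.ofReal_cos]
    rw [Complex.two_cos, neg_mul]
  have hch2 : c * u^(d:ℤ) = u^(d:ℤ) * u^(d:ℤ) + 1 := by
    rw [hch]
    field_simp
  -- abar at d is 1
  have habard : abar d m A B d = 1 := by
    unfold abar
    rw [hAd, hBd, hconj d, hacoef d, ← add_smul,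
      show (2*(d:ℤ)-(d:ℤ)) = (d:ℤ) from by ring, ← add_div, ← hch, div_self hc,
      one_smul]
  -- abar j = abar 1 ^ j for 1 ≤ j ≤ d
  have key : ∀ j, 1 ≤ j → j ≤ d → abar d m A B j = (abar d m A B 1)^j := by
    intro j h1 hjd
    by_cases hj : j ≤ d - 1
    · exact hrel2 j h1 hj
    · have hjd' : j = d := by omega
      have h2 : abar d m A B 1 * abar d m A B (d-1) = 1 := hrel1 1 le_rfl (by omega)
      rw [hrel2 (d-1) (by omega) le_rfl] at h2
      rw [hjd', habard]
      calc (1 : Matrix (Fin N) (Fin N) ℂ)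
          = abar d m A B 1 * (abar d m A B 1)^(d-1) := h2.symm
        _ = (abar d m A B 1)^(1+(d-1)) := by rw [pow_add, pow_one]
        _ = (abar d m A B 1)^d := by congr 1; omega
  intro k hk1
  induction k, hk1 using Nat.le_induction with
  | base =>
    intro _
    norm_num [Finset.sum_range_one, omg_zero]
  | succ n hn ih =>
    intro hnd1
    have hnd : n ≤ d := by omega
    have ihn := ih hnd
    -- scalar values
    have hPne : u ^ (2*(n:ℤ)-(d:ℤ)) ≠ 0 := zpow_ne_zero _ hu
    have hqne : u ^ (2:ℤ) ≠ 0 := zpow_ne_zero _ hu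
    have hHne : u ^ (d:ℤ) ≠ 0 := zpow_ne_zero _ hu
    have hx : acoef d m n = u ^ (2*(n:ℤ)-(d:ℤ)) / c := hacoef n
    have hy : (starRingEnd ℂ) (acoef d m n) = (u ^ (2*(n:ℤ)-(d:ℤ)))⁻¹ / c := hconj n
    have hz : acoef d m 1 = u^(2:ℤ) * (u^(d:ℤ))⁻¹ / c := by
      rw [hacoef 1, show (2*((1:ℕ):ℤ)-(d:ℤ)) = (2:ℤ) + (-(d:ℤ)) from by push_cast; ring,
        zpow_add₀ hu, _root_.zpow_neg]
    have hw : (starRingEnd ℂ) (acoef d m 1) = u^(d:ℤ) * (u^(2:ℤ))⁻¹ / c := by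
      rw [hconj 1, show (2*((1:ℕ):ℤ)-(d:ℤ)) = (2:ℤ) + (-(d:ℤ)) from by push_cast; ring,
        zpow_add₀ hu, _root_.zpow_neg, mul_inv, inv_inv, mul_comm]
    have hx' : acoef d m (n+1) = u ^ (2*(n:ℤ)-(d:ℤ)) * u^(2:ℤ) / c := by
      rw [hacoef (n+1),
        show (2*(((n+1:ℕ)):ℤ)-(d:ℤ)) = (2*(n:ℤ)-(d:ℤ)) + (2:ℤ) from by push_cast; ring,
        zpow_add₀ hu]
    have hw' : (starRingEnd ℂ) (acoef d m (n+1)) = (u ^ (2*(n:ℤ)-(d:ℤ)) * u^(2:ℤ))⁻¹ / c := by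
      rw [hconj (n+1),
        show (2*(((n+1:ℕ)):ℤ)-(d:ℤ)) = (2*(n:ℤ)-(d:ℤ)) + (2:ℤ) from by push_cast; ring,
        zpow_add₀ hu]
    set δ : ℂ := (starRingEnd ℂ) (acoef d m (n+1)) -
      (starRingEnd ℂ) (acoef d m n) * (starRingEnd ℂ) (acoef d m 1) with hδ_def
    obtain ⟨hδ1, hδ2, hδ3, hδ4⟩ := scalar_key (u ^ (2*(n:ℤ)-(d:ℤ))) (u^(2:ℤ)) (u^(d:ℤ)) c
      hPne hqne hHne hc hch2 (acoef d m n) ((starRingEnd ℂ) (acoef d m n)) (acoef d m 1)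
      ((starRingEnd ℂ) (acoef d m 1)) (acoef d m (n+1)) ((starRingEnd ℂ) (acoef d m (n+1)))
      δ hx hy hz hw hx' hw' hδ_def
    have hδne : δ ≠ 0 := left_ne_zero_of_mul_eq_one hδ1
    -- omg-forms of the coefficients
    have hωn1 : omg d (((n:ℝ)+1)/(m:ℝ)) =
        (u ^ (2*(n:ℤ)-(d:ℤ)) * u^(2:ℤ) * u^(d:ℤ)) * (u ^ (2*(n:ℤ)-(d:ℤ)) * u^(2:ℤ) * u^(d:ℤ)) := by
      rw [show ((n:ℝ)+1)/(m:ℝ) = (((4*(n:ℤ)+4):ℤ):ℝ)/(4*(m:ℝ)) from by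
        push_cast; field_simp]
      rw [omg_div4, ← hu_def,
        show ((4*(n:ℤ)+4):ℤ) = ((2*(n:ℤ)-(d:ℤ))+(2:ℤ)+(d:ℤ)) + ((2*(n:ℤ)-(d:ℤ))+(2:ℤ)+(d:ℤ))
          from by ring]
      simp only [zpow_add₀ hu]
    have hωn : omg d ((n:ℝ)/(m:ℝ)) =
        (u ^ (2*(n:ℤ)-(d:ℤ)) * u^(d:ℤ)) * (u ^ (2*(n:ℤ)-(d:ℤ)) * u^(d:ℤ)) := by
      rw [show (n:ℝ)/(m:ℝ) = (((4*(n:ℤ)):ℤ):ℝ)/(4*(m:ℝ)) from by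
        push_cast; field_simp]
      rw [omg_div4, ← hu_def,
        show ((4*(n:ℤ)):ℤ) = ((2*(n:ℤ)-(d:ℤ))+(d:ℤ)) + ((2*(n:ℤ)-(d:ℤ))+(d:ℤ)) from by ring]
      simp only [zpow_add₀ hu]
    have hω1 : omg d (1/(m:ℝ)) = u^(2:ℤ) * u^(2:ℤ) := by
      rw [show (1:ℝ)/(m:ℝ) = (((4:ℤ)):ℝ)/(4*(m:ℝ)) from by push_cast; field_simp]
      rw [omg_div4, ← hu_def, show ((4:ℤ)) = (2:ℤ) + (2:ℤ) from by ring]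
      simp only [zpow_add₀ hu]
    have hs1 : δ⁻¹ * (acoef d m n * acoef d m 1 - acoef d m (n+1)) =
        -(omg d (((n:ℝ)+1)/(m:ℝ))) := by rw [hωn1]; exact hδ2
    have hs2 : δ⁻¹ * (acoef d m n * (starRingEnd ℂ) (acoef d m 1)) =
        omg d ((n:ℝ)/(m:ℝ)) := by rw [hωn]; exact hδ3
    have hs3 : δ⁻¹ * ((starRingEnd ℂ) (acoef d m n) * acoef d m 1) =
        omg d (1/(m:ℝ)) := by rw [hω1]; exact hδ4
    -- the matrix relation
    have hk1 : abar d m A B (n+1) = abar d m A B n * abar d m A B 1 := by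
      rw [key (n+1) (by omega) hnd1, key n hn hnd, ← pow_succ]
    have E : acoef d m (n+1) • A^(n+1) + (starRingEnd ℂ) (acoef d m (n+1)) • B^(n+1)
        = (acoef d m n * acoef d m 1) • A^(n+1) +
          ((acoef d m n * (starRingEnd ℂ) (acoef d m 1)) • (A^n*B) +
          (((starRingEnd ℂ) (acoef d m n) * acoef d m 1) • (B^n*A) +
          ((starRingEnd ℂ) (acoef d m n) * (starRingEnd ℂ) (acoef d m 1)) • B^(n+1))) := by
      have h := hk1
      unfold abar at h
      rw [h]
      simp only [pow_one]
      rw [add_mul, mul_add, mul_add]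
      simp only [smul_mul_assoc, mul_smul_comm, smul_smul, ← pow_succ]
      module
    have E2 : δ • B^(n+1)
        = (acoef d m n * acoef d m 1 - acoef d m (n+1)) • A^(n+1) +
          ((acoef d m n * (starRingEnd ℂ) (acoef d m 1)) • (A^n*B) +
          ((starRingEnd ℂ) (acoef d m n) * acoef d m 1) • (B^n*A)) := by
      calc δ • B^(n+1)
          = (acoef d m (n+1) • A^(n+1) + (starRingEnd ℂ) (acoef d m (n+1)) • B^(n+1)) -
            acoef d m (n+1) • A^(n+1) -
            ((starRingEnd ℂ) (acoef d m n) * (starRingEnd ℂ) (acoef d m 1)) • B^(n+1) := by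
            rw [hδ_def]; module
        _ = _ := by rw [E]; module
    have hB1 : B^(n+1) =
        (δ⁻¹ * (acoef d m n * acoef d m 1 - acoef d m (n+1))) • A^(n+1) +
        ((δ⁻¹ * (acoef d m n * (starRingEnd ℂ) (acoef d m 1))) • (A^n*B) +
        (δ⁻¹ * ((starRingEnd ℂ) (acoef d m n) * acoef d m 1)) • (B^n*A)) := by
      have e3 : B^(n+1) = δ⁻¹ • (δ • B^(n+1)) := by
        rw [smul_smul, inv_mul_cancel₀ hδne, one_smul]
      rw [e3, E2, smul_add, smul_add, smul_smul, smul_smul, smul_smul]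
    rw [hs1, hs2, hs3] at hB1
    -- final assembly
    push_cast [Nat.add_sub_cancel]
    rw [Finset.sum_range_succ, Nat.sub_self, pow_zero, mul_one]
    rw [hB1, ihn, add_mul, smul_mul_assoc, smul_mul_assoc, ← pow_succ, Finset.sum_mul]
    rw [show (∑ t ∈ Finset.range n, A^t*B*A^(n-1-t)*A) = ∑ t ∈ Finset.range n, A^t*B*A^(n-t)
      from Finset.sum_congr rfl (by
        intro t ht
        rw [mul_assoc, ← pow_succ, show n-1-t+1 = n-t from by
          have := Finset.mem_range.mp ht; omega, mul_assoc])]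
    have hmul1 : omg d (1/(m:ℝ)) * omg d ((n:ℝ)/(m:ℝ)) = omg d (((n:ℝ)+1)/(m:ℝ)) := by
      rw [omg_mul]; congr 1; ring
    have hmul2 : omg d (1/(m:ℝ)) * omg d (((n:ℝ)-1)/(m:ℝ)) = omg d (((n:ℝ)+1-1)/(m:ℝ)) := by
      rw [omg_mul]; congr 1; ring
    have heq : omg d (((n:ℝ)+1-1)/(m:ℝ)) = omg d ((n:ℝ)/(m:ℝ)) := by norm_num
    match_scalars
    · linear_combination ((1:ℂ)-(n:ℂ)) * hmul1
    · linear_combination heq.symm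
    · linear_combination hmul2
end
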